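/- arXiv:1901.02157 — 13 statements merged into one kernel-verified Lean document; each statement's English description precedes it below -/
import Mathlib

section
/- Let d ≥ 1 and let T be a d×d real matrix all of whose diagonal entries equal 1. Then there exists a real number p with 0 < p ≤ 1 such that p·T ∈ ℬ_d if and only if (1/d)·T ∈ ℬ_d. -/
/-- The set of `d × d` Bernoulli compatible matrices: the convex hull of the
outer products `v vᵀ` of 0-1 vectors `v ∈ {0,1}^d`. -/
def BernoulliSet (d : ℕ) : Set (Matrix (Fin d) (Fin d) ℝ) :=
  convexHull ℝ {M | ∃ v : Fin d → ℝ, (∀ i, v i = 0 ∨ v i = 1) ∧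
    M = Matrix.of (fun i j => v i * v j)}

theorem stmt0 (d : ℕ) (hd : 1 ≤ d) (T : Matrix (Fin d) (Fin d) ℝ)
    (hdiag : ∀ i, T i i = 1) :
    (∃ p : ℝ, 0 < p ∧ p ≤ 1 ∧ p • T ∈ BernoulliSet d) ↔
      ((1 : ℝ) / d) • T ∈ BernoulliSet d := by
  have hd1 : (1:ℝ) ≤ (d:ℝ) := by exact_mod_cast hd
  have hd0 : (0:ℝ) < d := lt_of_lt_of_le one_pos hd1
  set S : Set (Matrix (Fin d) (Fin d) ℝ) :=
    {M | ∃ v : Fin d → ℝ, (∀ i, v i = 0 ∨ v i = 1) ∧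
      M = Matrix.of (fun i j => v i * v j)} with hS
  have h0S : (0 : Matrix (Fin d) (Fin d) ℝ) ∈ S := by
    refine ⟨0, fun i => Or.inl rfl, ?_⟩
    ext i j; simp
  constructor
  · rintro ⟨p, hp0, hp1, hmem⟩
    rw [BernoulliSet, ← hS, mem_convexHull_iff_exists_fintype] at hmem
    obtain ⟨ι, _, w, z, hw0, hw1, hzS, hcm⟩ := hmem
    show ((1:ℝ)/d) • T ∈ convexHull ℝ S
    set c : ℝ := 1 / (p * d) with hc
    have hpd : (0:ℝ) < p * d := mul_pos hp0 hd0
    have hc0 : 0 < c := by positivity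
    -- representation of (1/d) • T
    have hrep : ((1:ℝ)/d) • T = ∑ i, (c * w i) • z i := by
      have h1 : ((1:ℝ)/d) • T = c • (p • T) := by
        rw [smul_smul]; congr 1; rw [hc]; field_simp
      rw [h1, ← hcm, Finset.smul_sum]
      exact Finset.sum_congr rfl fun i _ => (smul_smul c (w i) (z i))
    have hcw0 : ∀ i, 0 ≤ c * w i := fun i => mul_nonneg hc0.le (hw0 i)
    have hdiagnn : ∀ i, ∀ j : Fin d, 0 ≤ z i j j := by
      intro i j
      obtain ⟨v, hv, hzv⟩ := hzS i
      rw [hzv]; exact mul_self_nonneg _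
    -- trace identity
    have htrace : ∑ i, (c * w i) * (∑ j, z i j j) = 1 := by
      have h2 := congrArg (fun M : Matrix (Fin d) (Fin d) ℝ => ∑ j, M j j) hrep
      simp only [Matrix.smul_apply, Matrix.sum_apply, smul_eq_mul] at h2
      have hL : ∑ j : Fin d, 1/(d:ℝ) * T j j = 1 := by
        simp [hdiag]
        field_simp
      rw [hL] at h2
      calc ∑ i, (c * w i) * (∑ j, z i j j)
          = ∑ i, ∑ j, (c * w i) * z i j j := by
            exact Finset.sum_congr rfl fun i _ => Finset.mul_sum _ _ _
        _ = ∑ j : Fin d, ∑ i, (c * w i) * z i j j := Finset.sum_comm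
        _ = 1 := h2.symm
    -- each nonzero generator has trace ≥ 1
    have hn : ∀ i, z i ≠ 0 → (1:ℝ) ≤ ∑ j, z i j j := by
      intro i hne
      obtain ⟨v, hv, hzv⟩ := hzS i
      by_cases hall : ∀ j, v j = 0
      · exact absurd (by rw [hzv]; ext a b; simp [hall]) hne
      push_neg at hall
      obtain ⟨j, hj⟩ := hall
      have hvj : v j = 1 := (hv j).resolve_left hj
      have h1 : (1:ℝ) ≤ z i j j := by rw [hzv]; simp [hvj]
      calc (1:ℝ) ≤ z i j j := h1
        _ ≤ ∑ k, z i k k :=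
          Finset.single_le_sum (fun k _ => hdiagnn i k) (Finset.mem_univ j)
    -- restrict to nonzero generators
    set t' : Finset ι := Finset.univ.filter (fun i => z i ≠ 0) with ht'
    have hrep' : ((1:ℝ)/d) • T = ∑ i ∈ t', (c * w i) • z i := by
      rw [hrep]
      symm
      apply Finset.sum_subset (Finset.filter_subset _ _)
      intro i _ hni
      have hz0 : z i = 0 := by
        by_contra hcon
        exact hni (Finset.mem_filter.mpr ⟨Finset.mem_univ i, hcon⟩)
      simp [hz0]
    set s : ℝ := ∑ i ∈ t', c * w i with hs
    have hs0 : 0 ≤ s := Finset.sum_nonneg fun i _ => hcw0 i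
    have hs1 : s ≤ 1 := by
      calc s ≤ ∑ i ∈ t', (c * w i) * (∑ j, z i j j) := by
            apply Finset.sum_le_sum
            intro i hi
            have hne := (Finset.mem_filter.mp hi).2
            nlinarith [hn i hne, hcw0 i]
        _ ≤ ∑ i, (c * w i) * (∑ j, z i j j) := by
            apply Finset.sum_le_sum_of_subset_of_nonneg (Finset.filter_subset _ _)
            intro i _ _
            exact mul_nonneg (hcw0 i) (Finset.sum_nonneg fun j _ => hdiagnn i j)
        _ = 1 := htrace
    rcases eq_or_lt_of_le hs0 with h0 | hspos
    · have hz : ((1:ℝ)/d) • T = 0 := by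
        rw [hrep']
        apply Finset.sum_eq_zero
        intro i hi
        have hwi : c * w i = 0 :=
          (Finset.sum_eq_zero_iff_of_nonneg (fun i _ => hcw0 i)).mp h0.symm i hi
        simp [hwi]
      rw [hz]
      exact subset_convexHull ℝ S h0S
    · have hmemC : t'.centerMass (fun i => c * w i) z ∈ convexHull ℝ S :=
        Finset.centerMass_mem_convexHull t' (fun i _ => hcw0 i) hspos
          (fun i _ => hzS i)
      have heq : ((1:ℝ)/d) • T = s • t'.centerMass (fun i => c * w i) z := by
        rw [Finset.centerMass, smul_smul, ← hs, mul_inv_cancel₀ (ne_of_gt hspos),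
          one_smul, hrep']
      rw [heq]
      exact (convex_convexHull ℝ S).smul_mem_of_zero_mem
        (subset_convexHull ℝ S h0S) hmemC ⟨hs0, hs1⟩
  · intro h
    refine ⟨1/d, by positivity, ?_, h⟩
    rw [div_le_one hd0]
    exact hd1
end

section
/- Let d ≥ 2, let β₁, …, β_d ∈ ℝ and α₁, …, α_{d−1} ∈ ℝ, and let B be the d×d symmetric 'arrowhead' matrix with B_{ii} = β_i for 1 ≤ i ≤ d, with B_{id} = B_{di} = α_i for 1 ≤ i ≤ d−1, and with B_{ij} = 0 for all i ≠ j with 1 ≤ i, j ≤ d−1. Then B ∈ ℬ_d if and only if the following three conditions hold: (1) 0 ≤ α_i ≤ β_i for every 1 ≤ i ≤ d−1; (2) ∑_{i=1}^{d−1} α_i ≤ β_d; (3) ∑_{i=1}^{d} β_i − ∑_{i=1}^{d−1} α_i ≤ 1. -/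
open Finset

/-- A sum of 0/1 values is zero or at least one. -/
lemma aux_sum01 {d : ℕ} (E : Finset (Fin d)) (v : Fin d → ℝ)
    (hv : ∀ i, v i = 0 ∨ v i = 1) :
    (∑ i ∈ E, v i) = 0 ∨ 1 ≤ ∑ i ∈ E, v i := by
  by_cases h : ∀ i ∈ E, v i = 0
  · exact Or.inl (Finset.sum_eq_zero h)
  · push_neg at h
    obtain ⟨i, hi, hne⟩ := h
    have h1 : v i = 1 := (hv i).resolve_left hne
    right
    calc (1:ℝ) = v i := h1.symm
    _ ≤ ∑ j ∈ E, v j := Finset.single_le_sum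
        (fun j _ => by rcases hv j with h|h <;> simp [h]) hi

lemma aux_dsum {d : ℕ} (E : Finset (Fin d)) (v : Fin d → ℝ)
    (hv : ∀ i, v i = 0 ∨ v i = 1) :
    ∑ i ∈ E, ∑ j ∈ E.erase i, v i * v j
      = (∑ i ∈ E, v i) * (∑ i ∈ E, v i) - (∑ i ∈ E, v i) := by
  have hq : ∀ i, v i * v i = v i := fun i => by rcases hv i with h|h <;> simp [h]
  have key : ∀ i ∈ E, ∑ j ∈ E.erase i, v i * v j
      = v i * (∑ j ∈ E, v j) - v i := by
    intro i hi
    rw [← Finset.mul_sum, Finset.sum_erase_eq_sub hi, mul_sub, hq]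
  rw [Finset.sum_congr rfl key, Finset.sum_sub_distrib, ← Finset.sum_mul]

lemma aux_split {d : ℕ} (L : Fin d) (f : Fin d → ℝ) (a : ℝ) :
    ∑ i, (if i = L then a else f i) = a + ∑ i ∈ Finset.univ.erase L, f i := by
  rw [← Finset.add_sum_erase _ _ (Finset.mem_univ L), if_pos rfl]
  congr 1
  exact Finset.sum_congr rfl fun i hi => if_neg (Finset.mem_erase.mp hi).1

lemma aux_P1 {d : ℕ} (f : Fin d → ℝ) (b c : Fin d) :
    ∑ x, f x * ((if b = x then (1:ℝ) else 0) * if c = x then (1:ℝ) else 0)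
      = if b = c then f b else 0 := by
  rw [Finset.sum_eq_single b]
  · by_cases h : c = b
    · simp [h]
    · simp [h, Ne.symm h]
  · intro x _ hxb
    rw [if_neg (fun h : b = x => hxb h.symm), zero_mul, mul_zero]
  · intro h; exact absurd (Finset.mem_univ b) h

lemma aux_P2 {d : ℕ} (L : Fin d) (a : ℝ) (g h1 h2 : Fin d → ℝ) :
    ∑ x, (if x = L then a else g x) *
        ((if x = L then 0 else h1 x) * (if x = L then 0 else h2 x))
      = ∑ x ∈ Finset.univ.erase L, g x * (h1 x * h2 x) := by
  rw [← Finset.add_sum_erase _ _ (Finset.mem_univ L)]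
  have h0 : (if L = L then a else g L) *
      ((if L = L then (0:ℝ) else h1 L) * (if L = L then (0:ℝ) else h2 L)) = 0 := by simp
  rw [h0, zero_add]
  refine Finset.sum_congr rfl fun x hx => ?_
  have hxL := (Finset.mem_erase.mp hx).1
  rw [if_neg hxL, if_neg hxL, if_neg hxL]

theorem stmt2 (d : ℕ) (hd : 2 ≤ d) (β α : Fin d → ℝ)
    (B : Matrix (Fin d) (Fin d) ℝ)
    (L : Fin d) (hL : L.val = d - 1)
    (hdiag : ∀ i, B i i = β i)
    (harrow : ∀ i, i ≠ L → B i L = α i ∧ B L i = α i)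
    (hzero : ∀ i j, i ≠ j → i ≠ L → j ≠ L → B i j = 0) :
    B ∈ BernoulliSet d ↔
      ((∀ i, i ≠ L → 0 ≤ α i ∧ α i ≤ β i) ∧
       (∑ i ∈ Finset.univ.erase L, α i) ≤ β L ∧
       (∑ i, β i) - (∑ i ∈ Finset.univ.erase L, α i) ≤ 1) := by
  set S : Set (Matrix (Fin d) (Fin d) ℝ) :=
    {M | ∃ v : Fin d → ℝ, (∀ i, v i = 0 ∨ v i = 1) ∧
      M = Matrix.of (fun i j => v i * v j)} with hS
  set E : Finset (Fin d) := Finset.univ.erase L with hE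
  constructor
  · intro hB
    -- generic halfspace lemma
    have key : ∀ (f : Matrix (Fin d) (Fin d) ℝ → ℝ), IsLinearMap ℝ f → ∀ c : ℝ,
        (∀ v : Fin d → ℝ, (∀ i, v i = 0 ∨ v i = 1) →
          f (Matrix.of fun i j => v i * v j) ≤ c) → f B ≤ c := by
      intro f hf c hSc
      have hsub : S ⊆ {M | f M ≤ c} := by
        rintro M ⟨v, hv, rfl⟩; exact hSc v hv
      exact convexHull_min hsub (convex_halfSpace_le hf c) hB
    -- entry linear maps
    have hdsumB : ∑ i ∈ E, ∑ j ∈ E.erase i, B i j = 0 := by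
      apply Finset.sum_eq_zero
      intro i hi
      apply Finset.sum_eq_zero
      intro j hj
      have hji := Finset.mem_erase.mp hj
      exact hzero i j (Ne.symm hji.1) (Finset.mem_erase.mp hi).1
        (Finset.mem_erase.mp hji.2).1
    have hαB : ∑ i ∈ E, B i L = ∑ i ∈ E, α i := by
      refine Finset.sum_congr rfl fun i hi => ?_
      exact (harrow i (Finset.mem_erase.mp hi).1).1
    have hβB : ∑ i, B i i = ∑ i, β i := Finset.sum_congr rfl fun i _ => hdiag i
    refine ⟨fun i hiL => ?_, ?_, ?_⟩
    · constructor
      · have h := key (fun M => -(M i L)) ⟨fun A C => by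
            simp only [Matrix.add_apply]; ring, fun c A => by
            simp only [Matrix.smul_apply, smul_eq_mul]; ring⟩ 0 ?_
        · have := (harrow i hiL).1
          linarith
        · intro v hv
          simp only [Matrix.of_apply, neg_nonpos]
          rcases hv i with h|h <;> rcases hv L with h'|h' <;> simp [h, h']
      · have h := key (fun M => M i L - M i i) ⟨fun A C => by
            simp only [Matrix.add_apply]; ring, fun c A => by
            simp only [Matrix.smul_apply, smul_eq_mul]; ring⟩ 0 ?_
        · rw [(harrow i hiL).1, hdiag i] at h
          linarith
        · intro v hv
          simp only [Matrix.of_apply]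
          rcases hv i with h|h <;> rcases hv L with h'|h' <;> simp [h, h']
    · have h := key (fun M => (∑ i ∈ E, M i L) - M L L -
          ∑ i ∈ E, ∑ j ∈ E.erase i, M i j) ?_ 0 ?_
      · rw [hαB, hdiag L, hdsumB] at h
        linarith
      · constructor
        · intro A C
          simp [Matrix.add_apply, Finset.sum_add_distrib]; ring
        · intro c A
          simp only [Matrix.smul_apply, smul_eq_mul, mul_sub, Finset.mul_sum]
      · intro v hv
        simp only [Matrix.of_apply]
        rw [aux_dsum E v hv, ← Finset.sum_mul]
        set s := ∑ i ∈ E, v i with hs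
        rcases aux_sum01 E v hv with h|h <;>
          rcases hv L with h'|h' <;>
          nlinarith [sq_nonneg (s - 1)]
    · have h := key (fun M => (∑ i, M i i) - (∑ i ∈ E, M i L) -
          ∑ i ∈ E, ∑ j ∈ E.erase i, M i j) ?_ 1 ?_
      · rw [hαB, hβB, hdsumB] at h
        linarith
      · constructor
        · intro A C
          simp [Matrix.add_apply, Finset.sum_add_distrib]; ring
        · intro c A
          simp only [Matrix.smul_apply, smul_eq_mul, mul_sub, Finset.mul_sum]
      · intro v hv
        have hq : ∀ i, v i * v i = v i := fun i => by rcases hv i with h|h <;> simp [h]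
        simp only [Matrix.of_apply]
        rw [aux_dsum E v hv, ← Finset.sum_mul]
        have hdiagsum : ∑ i, v i * v i = v L + ∑ i ∈ E, v i := by
          rw [Finset.sum_congr rfl fun i _ => hq i, hE,
            ← Finset.add_sum_erase _ v (Finset.mem_univ L)]
        rw [hdiagsum]
        set s := ∑ i ∈ E, v i with hs
        rcases aux_sum01 E v hv with h|h <;>
          rcases hv L with h'|h' <;>
          nlinarith [sq_nonneg (s - 1)]
  · rintro ⟨h1, h2, h3⟩
    set sα := ∑ i ∈ E, α i with hsα
    -- index type
    set u : (Fin d ⊕ Fin d) → Fin d → ℝ := fun x =>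
      Sum.elim (fun i => fun j => if j = i then 1 else 0)
        (fun i => if i = L then (fun _ => 0) else fun j => if j = i ∨ j = L then 1 else 0) x
      with hu
    set w : (Fin d ⊕ Fin d) → ℝ := fun x =>
      Sum.elim (fun i => if i = L then β L - sα else β i - α i)
        (fun i => if i = L then 1 - (∑ i, β i) + sα else α i) x with hw
    set z : (Fin d ⊕ Fin d) → Matrix (Fin d) (Fin d) ℝ := fun x =>
      Matrix.of (fun j k => u x j * u x k) with hz
    have hβsplit : ∑ i, β i = β L + ∑ i ∈ E, β i :=
      (Finset.add_sum_erase _ β (Finset.mem_univ L)).symm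
    have hw₀ : ∀ x ∈ (Finset.univ : Finset (Fin d ⊕ Fin d)), 0 ≤ w x := by
      rintro (i|i) -
      · simp only [hw, Sum.elim_inl]
        split_ifs with h
        · linarith
        · have := h1 i h; linarith [this.1, this.2]
      · simp only [hw, Sum.elim_inr]
        split_ifs with h
        · linarith
        · exact (h1 i h).1
    have hwsum : ∑ x, w x = 1 := by
      rw [Fintype.sum_sum_type]
      have e1 : ∑ i, (if i = L then β L - sα else β i - α i)
          = (β L - sα) + ∑ i ∈ E, (β i - α i) := by
        rw [← Finset.add_sum_erase _ _ (Finset.mem_univ L), if_pos rfl]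
        congr 1
        refine Finset.sum_congr rfl fun i hi => ?_
        rw [if_neg (Finset.mem_erase.mp hi).1]
      have e2 : ∑ i, (if i = L then 1 - (∑ i, β i) + sα else α i)
          = (1 - (∑ i, β i) + sα) + sα := by
        rw [← Finset.add_sum_erase _ _ (Finset.mem_univ L), if_pos rfl]
        congr 1
        refine Finset.sum_congr rfl fun i hi => ?_
        rw [if_neg (Finset.mem_erase.mp hi).1]
      simp only [hw, Sum.elim_inl, Sum.elim_inr]
      rw [e1, e2, Finset.sum_sub_distrib]
      rw [hβsplit]
      ring
    have hzS : ∀ x ∈ (Finset.univ : Finset (Fin d ⊕ Fin d)), z x ∈ S := by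
      rintro x -
      refine ⟨u x, ?_, rfl⟩
      rcases x with i | i
      · intro j; simp only [hu, Sum.elim_inl]; split_ifs <;> simp
      · intro j
        simp only [hu, Sum.elim_inr]
        by_cases hi : i = L
        · simp [hi]
        · simp only [if_neg hi]
          split_ifs <;> simp
    have hmem := Finset.centerMass_mem_convexHull (Finset.univ : Finset (Fin d ⊕ Fin d))
      hw₀ (by rw [hwsum]; norm_num) hzS
    rw [Finset.centerMass_eq_of_sum_1 _ _ hwsum] at hmem
    have hsum : ∑ x, w x • z x = B := by
      ext j k
      rw [Matrix.sum_apply]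
      simp only [Matrix.smul_apply, hz, Matrix.of_apply, smul_eq_mul]
      rw [Fintype.sum_sum_type]
      simp only [hu, hw, Sum.elim_inl, Sum.elim_inr, apply_ite (fun g : Fin d → ℝ => g j),
        apply_ite (fun g : Fin d → ℝ => g k)]
      by_cases hj : j = L <;> by_cases hk : k = L
      · subst hj; subst hk
        rw [aux_P1, aux_P2]
        simp only [eq_self_iff_true, if_true, or_true, mul_one, one_mul]
        rw [← hE, ← hsα, hdiag]
        ring
      · subst hj
        rw [aux_P1, aux_P2]
        rw [if_neg (fun h : j = k => hk h.symm)]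
        simp only [eq_self_iff_true, if_true, or_true, one_mul, hk, or_false,
          mul_ite, mul_one, mul_zero]
        rw [Finset.sum_ite_eq, if_pos (Finset.mem_erase.mpr ⟨hk, Finset.mem_univ k⟩),
          (harrow k hk).2]
        ring
      · subst hk
        rw [aux_P1, aux_P2]
        rw [if_neg hj]
        simp only [eq_self_iff_true, if_true, or_true, mul_one, hj, or_false,
          mul_ite, mul_one, mul_zero]
        rw [Finset.sum_ite_eq, if_pos (Finset.mem_erase.mpr ⟨hj, Finset.mem_univ j⟩),
          (harrow j hj).1]
        ring
      · rw [aux_P1, aux_P2]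
        simp only [hj, hk, if_false, or_false]
        by_cases hjk : j = k
        · subst hjk
          simp only [eq_self_iff_true, if_true, mul_ite, mul_one, mul_zero, one_mul]
          rw [Finset.sum_ite_eq, if_pos (Finset.mem_erase.mpr ⟨hj, Finset.mem_univ j⟩),
            hdiag]
          simp
        · rw [if_neg hjk, hzero j k hjk hj hk, Finset.sum_eq_zero, add_zero]
          intro x hx
          by_cases h1 : j = x
          · have h2 : ¬ k = x := fun h => hjk (h1.trans h.symm)
            simp [h1, h2]
          · simp [h1]
    rw [hsum] at hmem
    exact hmem
end

section
/- Let d ≥ 2 and α₁, …, α_{d−1} ∈ ℝ, and set α₀ = 1. Let T be the d×d symmetric Toeplitz matrix with entries T_{ij} = α_{|i−j|}. If α_{d−1} ≥ 0 and the chain of inequalities 1 − α₁ ≥ α₁ − α₂ ≥ ⋯ ≥ α_{d−2} − α_{d−1} ≥ 0 holds (i.e., the differences α_{k−1} − α_k for k = 1, …, d−1 are nonnegative and nonincreasing in k), then (1/d)·T ∈ ℬ_d, i.e. T is a tail dependence matrix. -/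
/-- Indicator vector of the interval `[s - ℓ + 1, s] ∩ [0, d)` viewed inside `Fin d`. -/
private def tdmV (d ℓ s : ℕ) : Fin d → ℝ := fun i => if i.val ≤ s ∧ s < i.val + ℓ then 1 else 0

private lemma tdmV01 (d ℓ s : ℕ) (i : Fin d) : tdmV d ℓ s i = 0 ∨ tdmV d ℓ s i = 1 := by
  unfold tdmV; split <;> simp

private lemma tdm_telescope (g : ℕ → ℝ) (a b : ℕ) (hab : a ≤ b + 1) :
    ∑ m ∈ Finset.Icc a b, (g m - g (m + 1)) = g a - g (b + 1) := by
  rw [← Finset.Ico_add_one_right_eq_Icc, Finset.sum_Ico_eq_sum_range]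
  have h := Finset.sum_range_sub' (fun i => g (a + i)) (b + 1 - a)
  simpa [← add_assoc, Nat.add_sub_cancel' hab] using h

private lemma tdm_count (d ℓ : ℕ) (i j : Fin d) :
    ∑ s ∈ Finset.range (d + ℓ - 1), tdmV d ℓ s i * tdmV d ℓ s j
      = ((ℓ - Nat.dist i.val j.val : ℕ) : ℝ) := by
  have h1 : ∀ s, tdmV d ℓ s i * tdmV d ℓ s j
      = if s ∈ Finset.Ico (max i.val j.val) (min i.val j.val + ℓ) then (1 : ℝ) else 0 := by
    intro s
    unfold tdmV
    simp only [Finset.mem_Ico, ite_mul, mul_ite, one_mul, mul_one, mul_zero]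
    split_ifs <;> first | rfl | omega
  rw [Finset.sum_congr rfl fun s _ => h1 s, Finset.sum_ite_mem]
  have hsub : Finset.Ico (max i.val j.val) (min i.val j.val + ℓ) ⊆ Finset.range (d + ℓ - 1) := by
    intro s hs
    simp only [Finset.mem_Ico] at hs
    simp only [Finset.mem_range]
    have := i.isLt; have := j.isLt
    omega
  rw [Finset.inter_eq_right.mpr hsub, Finset.sum_const, Nat.card_Ico, nsmul_eq_mul, mul_one]
  congr 1
  have := i.isLt; have := j.isLt
  simp only [Nat.dist]
  omega

theorem stmt3 (d : ℕ) (hd : 2 ≤ d) (α : ℕ → ℝ) (hα0 : α 0 = 1)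
    (T : Matrix (Fin d) (Fin d) ℝ)
    (hT : ∀ i j, T i j = α (Nat.dist i.val j.val))
    (h1 : 0 ≤ α (d - 1))
    (h2 : ∀ k, 1 ≤ k → k ≤ d - 1 → 0 ≤ α (k - 1) - α k)
    (h3 : ∀ k, 1 ≤ k → k + 1 ≤ d - 1 → α k - α (k + 1) ≤ α (k - 1) - α k) :
    ((1 : ℝ) / d) • T ∈ BernoulliSet d := by
  set D := d - 1 with hDdef
  have hd1 : 1 ≤ D := by omega
  have hdpos : (0 : ℝ) < d := by positivity
  set βf : ℕ → ℝ := fun m => if m ≤ D then α (m - 1) - α m else 0 with hβf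
  set c : ℕ → ℝ := fun ℓ => βf ℓ - βf (ℓ + 1) with hc
  have hβnn : ∀ m, 0 ≤ βf m := by
    intro m
    simp only [hβf]
    split
    · rcases Nat.eq_zero_or_pos m with rfl | hm
      · simp
      · exact h2 m hm ‹m ≤ D›
    · exact le_refl 0
  have hcnn : ∀ ℓ, 1 ≤ ℓ → ℓ ≤ D → 0 ≤ c ℓ := by
    intro ℓ hℓ1 hℓD
    simp only [hc, hβf]
    by_cases h : ℓ + 1 ≤ D
    · rw [if_pos hℓD, if_pos h]
      have h3' := h3 ℓ hℓ1 h
      simp only [Nat.add_sub_cancel]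
      linarith
    · rw [if_pos hℓD, if_neg h]
      have := h2 ℓ hℓ1 hℓD
      linarith
  have hsumc : ∀ a, a ≤ D + 1 → ∑ ℓ ∈ Finset.Icc a D, c ℓ = βf a := by
    intro a haD
    simp only [hc]
    rw [tdm_telescope βf a D haD]
    have : βf (D + 1) = 0 := by simp [hβf]
    rw [this, sub_zero]
  have htail : ∀ k, k ≤ D → ∑ m ∈ Finset.Icc (k + 1) D, βf m = α k - α D := by
    intro k hk
    have hco : ∀ m ∈ Finset.Icc (k + 1) D, βf m = α (m - 1) - α m := by
      intro m hm
      simp only [hβf]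
      rw [if_pos (Finset.mem_Icc.mp hm).2]
    rw [Finset.sum_congr rfl hco, ← Finset.Ico_add_one_right_eq_Icc, Finset.sum_Ico_eq_sum_range]
    have he : ∀ i : ℕ, α (k + 1 + i - 1) - α (k + 1 + i)
        = (fun t => α (k + t)) i - (fun t => α (k + t)) (i + 1) := by
      intro i
      simp only []
      rw [show k + 1 + i - 1 = k + i from by omega, show k + 1 + i = k + (i + 1) from by omega]
    rw [Finset.sum_congr rfl fun i _ => he i, Finset.sum_range_sub' (fun t => α (k + t))]
    simp only [add_zero]
    rw [show k + (D + 1 - (k + 1)) = D from by omega]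
  have hkey : ∀ k, k ≤ D → ∑ ℓ ∈ Finset.Icc 1 D, c ℓ * ((ℓ - k : ℕ) : ℝ) = α k - α D := by
    intro k hk
    have hcard : ∀ ℓ : ℕ, ((ℓ - k : ℕ) : ℝ) = ∑ _m ∈ Finset.Icc (k + 1) ℓ, (1 : ℝ) := by
      intro ℓ
      rw [Finset.sum_const, Nat.card_Icc, nsmul_eq_mul, mul_one]
      congr 1
      omega
    calc ∑ ℓ ∈ Finset.Icc 1 D, c ℓ * ((ℓ - k : ℕ) : ℝ)
        = ∑ ℓ ∈ Finset.Icc 1 D, ∑ _m ∈ Finset.Icc (k + 1) ℓ, c ℓ := by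
          refine Finset.sum_congr rfl fun ℓ _ => ?_
          rw [hcard ℓ, Finset.mul_sum]
          simp
      _ = ∑ m ∈ Finset.Icc (k + 1) D, ∑ ℓ ∈ Finset.Icc m D, c ℓ := by
          refine Finset.sum_comm' ?_
          intro x y
          simp only [Finset.mem_Icc]
          omega
      _ = ∑ m ∈ Finset.Icc (k + 1) D, βf m := by
          refine Finset.sum_congr rfl fun m hm => ?_
          exact hsumc m (by have := (Finset.mem_Icc.mp hm).2; omega)
      _ = α k - α D := htail k hk
  have hs1 : ∑ ℓ ∈ Finset.Icc 1 D, c ℓ = 1 - α 1 := by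
    rw [hsumc 1 (by omega)]
    simp only [hβf]
    rw [if_pos hd1]
    simp [hα0]
  have hs2 : ∑ ℓ ∈ Finset.Icc 1 D, c ℓ * (ℓ : ℝ) = 1 - α D := by
    have := hkey 0 (Nat.zero_le D)
    simpa [hα0] using this
  have hα1nn : 0 ≤ α 1 := by
    have ht := htail 1 hd1
    have hnn : 0 ≤ ∑ m ∈ Finset.Icc 2 D, βf m :=
      Finset.sum_nonneg fun m _ => hβnn m
    have : α D ≤ α 1 := by rw [ht] at hnn; linarith
    linarith
  -- the finite family of interval vectors
  set F : Finset ((_ : ℕ) × ℕ) := (Finset.Icc 1 D).sigma fun ℓ => Finset.range (d + ℓ - 1) with hF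
  set w : Option (Option ((_ : ℕ) × ℕ)) → ℝ := fun p =>
    Option.elim p (1 - α D / d - ∑ σ ∈ F, c σ.1 / d)
      (fun q => Option.elim q (α D / d) (fun σ => c σ.1 / d)) with hw
  set z : Option (Option ((_ : ℕ) × ℕ)) → Matrix (Fin d) (Fin d) ℝ := fun p =>
    Option.elim p 0
      (fun q => Option.elim q (Matrix.of fun _ _ => (1 : ℝ))
        (fun σ => Matrix.of fun i j => tdmV d σ.1 σ.2 i * tdmV d σ.1 σ.2 j)) with hz
  have hWsum : ∑ σ ∈ F, c σ.1 / d = (((d : ℝ) - 1) * (1 - α 1) + (1 - α D)) / d := by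
    rw [hF, Finset.sum_sigma]
    simp only [Finset.sum_const, Finset.card_range, nsmul_eq_mul]
    have hstep : ∀ ℓ ∈ Finset.Icc 1 D, ((d + ℓ - 1 : ℕ) : ℝ) * (c ℓ / d)
        = (((d : ℝ) - 1) / d) * c ℓ + (1 / d) * (c ℓ * (ℓ : ℝ)) := by
      intro ℓ _
      have hcast : ((d + ℓ - 1 : ℕ) : ℝ) = ((d : ℝ) - 1) + (ℓ : ℝ) := by
        rw [show d + ℓ - 1 = (d - 1) + ℓ from by omega]
        push_cast [Nat.cast_sub (by omega : 1 ≤ d)]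
        ring
      rw [hcast]
      field_simp
    rw [Finset.sum_congr rfl hstep, Finset.sum_add_distrib, ← Finset.mul_sum, ← Finset.mul_sum,
      hs1, hs2]
    field_simp
  have hw0 : w none = ((d : ℝ) - 1) * α 1 / d := by
    simp only [hw, Option.elim]
    rw [hWsum]
    field_simp
    ring
  have hsum1 : ∑ p ∈ Finset.insertNone (Finset.insertNone F), w p = 1 := by
    rw [Finset.sum_insertNone, Finset.sum_insertNone]
    simp only [hw, Option.elim]
    ring
  have hmemF : ∀ σ ∈ F, 1 ≤ σ.1 ∧ σ.1 ≤ D := by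
    intro σ hσ
    rw [hF, Finset.mem_sigma] at hσ
    exact Finset.mem_Icc.mp hσ.1
  have hwnn : ∀ p ∈ Finset.insertNone (Finset.insertNone F), 0 ≤ w p := by
    intro p hp
    match p with
    | none =>
        rw [hw0]
        have : (0:ℝ) ≤ (d : ℝ) - 1 := by linarith [show (2:ℝ) ≤ d by exact_mod_cast hd]
        positivity
    | some none =>
        simp only [hw, Option.elim]
        positivity
    | some (some σ) =>
        simp only [hw, Option.elim]
        have hσ : σ ∈ F := by
          simp only [Finset.mem_insertNone, Option.mem_def] at hp
          simpa using hp
        obtain ⟨ha, hb⟩ := hmemF σ hσ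
        have := hcnn σ.1 ha hb
        positivity
  have hzmem : ∀ p ∈ Finset.insertNone (Finset.insertNone F),
      z p ∈ {M : Matrix (Fin d) (Fin d) ℝ | ∃ v : Fin d → ℝ, (∀ i, v i = 0 ∨ v i = 1) ∧
        M = Matrix.of (fun i j => v i * v j)} := by
    intro p _
    match p with
    | none =>
        exact ⟨fun _ => 0, fun _ => Or.inl rfl, by ext i j; simp [hz]⟩
    | some none =>
        exact ⟨fun _ => 1, fun _ => Or.inr rfl, by ext i j; simp [hz]⟩
    | some (some σ) =>
        exact ⟨tdmV d σ.1 σ.2, tdmV01 d σ.1 σ.2, by simp [hz]⟩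
  have key : ((1 : ℝ) / d) • T = ∑ p ∈ Finset.insertNone (Finset.insertNone F), w p • z p := by
    rw [Finset.sum_insertNone, Finset.sum_insertNone]
    ext i j
    have hkd : Nat.dist i.val j.val ≤ D := by
      have := i.isLt; have := j.isLt
      simp only [Nat.dist]
      omega
    simp only [hw, hz, Option.elim, Matrix.add_apply, Matrix.smul_apply, smul_eq_mul,
      Matrix.zero_apply, Matrix.of_apply, Matrix.sum_apply, mul_zero, mul_one]
    rw [hT i j, hF, Finset.sum_sigma]
    have hin : ∀ ℓ ∈ Finset.Icc 1 D,
        ∑ s ∈ Finset.range (d + ℓ - 1), c (⟨ℓ, s⟩ : (_ : ℕ) × ℕ).1 / d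
            * (tdmV d ℓ s i * tdmV d ℓ s j)
          = (1 / d) * (c ℓ * ((ℓ - Nat.dist i.val j.val : ℕ) : ℝ)) := by
      intro ℓ _
      have hred : ∀ s : ℕ, c (⟨ℓ, s⟩ : (_ : ℕ) × ℕ).1 / (d : ℝ)
          * (tdmV d ℓ s i * tdmV d ℓ s j) = c ℓ / d * (tdmV d ℓ s i * tdmV d ℓ s j) :=
        fun s => rfl
      rw [Finset.sum_congr rfl fun s _ => hred s, ← Finset.mul_sum, tdm_count d ℓ i j]
      ring
    rw [Finset.sum_congr rfl hin, ← Finset.mul_sum, hkey _ hkd]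
    ring
  rw [key]
  exact Convex.sum_mem (convex_convexHull ℝ _) hwnn hsum1
    (fun p hp => subset_convexHull ℝ _ (hzmem p hp))
end

section
/- Let d ≥ 1 and let B be a symmetric d×d real matrix. Then B ∈ ℬ_d if and only if the following Farkas-type condition holds: for every c ∈ ℝ, every a : {1,…,d} → ℝ, and every family of reals (b_{ij})_{1 ≤ i < j ≤ d}, if c + ∑_{i=1}^d a_i v_i + ∑_{1 ≤ i < j ≤ d} b_{ij} v_i v_j ≥ 0 for every v ∈ {0,1}^d, then c + ∑_{i=1}^d a_i B_{ii} + ∑_{1 ≤ i < j ≤ d} b_{ij} B_{ij} ≥ 0. -/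
/-- Swap a triangular double sum. -/
lemma sum_Iio_swap {d : ℕ} (f : Fin d → Fin d → ℝ) :
    ∑ i, ∑ j ∈ Finset.Iio i, f i j = ∑ i, ∑ j ∈ Finset.Ioi i, f j i := by
  rw [Finset.sum_sigma', Finset.sum_sigma']
  refine Finset.sum_nbij' (fun p => ⟨p.2, p.1⟩) (fun p => ⟨p.2, p.1⟩) ?_ ?_ ?_ ?_ ?_ <;> simp

/-- Split a full double sum against a symmetric matrix into diagonal + strictly
upper triangular parts. -/
lemma sum_split {d : ℕ} (g M : Fin d → Fin d → ℝ) (hM : ∀ i j, M j i = M i j) :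
    ∑ i, ∑ j, g i j * M i j =
      ∑ i, g i i * M i i +
      ∑ i, ∑ j ∈ Finset.univ.filter (fun j => i < j), (g i j + g j i) * M i j := by
  have h1 : ∀ i : Fin d, ∑ j, g i j * M i j =
      g i i * M i i + ∑ j ∈ Finset.Ioi i, g i j * M i j
        + ∑ j ∈ Finset.Iio i, g i j * M i j := by
    intro i
    have : (Finset.univ : Finset (Fin d)) =
        insert i (Finset.Ioi i ∪ Finset.Iio i) := by
      ext j
      simp [lt_or_gt_of_ne, eq_comm]
      rcases lt_trichotomy i j with h | h | h <;> tauto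
    rw [this, Finset.sum_insert, Finset.sum_union]
    · ring
    · rw [Finset.disjoint_left]; intro j hj hj'; simp at hj hj'
      exact absurd (hj.trans hj') (lt_irrefl i)
    · simp
  simp_rw [h1, Finset.sum_add_distrib]
  have h2 : ∑ i, ∑ j ∈ Finset.Iio i, g i j * M i j
      = ∑ i, ∑ j ∈ Finset.Ioi i, g j i * M i j := by
    rw [sum_Iio_swap (fun i j => g i j * M i j)]
    exact Finset.sum_congr rfl fun i _ => Finset.sum_congr rfl fun j _ => by rw [hM]
  rw [h2]
  have h3 : ∀ i : Fin d, Finset.univ.filter (fun j => i < j) = Finset.Ioi i := by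
    intro i; ext j; simp
  simp_rw [h3, add_mul, Finset.sum_add_distrib]
  ring

/-- The linear functional built from coefficients `a`, `b` is linear. -/
lemma isLinearMap_coeff {d : ℕ} (a : Fin d → ℝ) (b : Fin d → Fin d → ℝ) :
    IsLinearMap ℝ (fun M : Matrix (Fin d) (Fin d) ℝ =>
      ∑ i, a i * M i i +
        ∑ i, ∑ j ∈ Finset.univ.filter (fun j => i < j), b i j * M i j) := by
  constructor
  · intro M N
    simp only [Matrix.add_apply, mul_add, Finset.sum_add_distrib]
    ring
  · intro r M
    simp only [Matrix.smul_apply, smul_eq_mul]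
    rw [mul_add, Finset.mul_sum, Finset.mul_sum]
    congr 1
    · exact Finset.sum_congr rfl fun i _ => by ring
    · refine Finset.sum_congr rfl fun i _ => ?_
      rw [Finset.mul_sum]; exact Finset.sum_congr rfl fun j _ => by ring

theorem stmt4 (d : ℕ) (hd : 1 ≤ d) (B : Matrix (Fin d) (Fin d) ℝ)
    (hsymm : B.IsSymm) :
    B ∈ BernoulliSet d ↔
      ∀ (c : ℝ) (a : Fin d → ℝ) (b : Fin d → Fin d → ℝ),
        (∀ v : Fin d → ℝ, (∀ i, v i = 0 ∨ v i = 1) →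
          0 ≤ c + ∑ i, a i * v i +
            ∑ i, ∑ j ∈ Finset.univ.filter (fun j => i < j), b i j * (v i * v j)) →
        0 ≤ c + ∑ i, a i * B i i +
          ∑ i, ∑ j ∈ Finset.univ.filter (fun j => i < j), b i j * B i j := by
  set S : Set (Matrix (Fin d) (Fin d) ℝ) :=
    {M | ∃ v : Fin d → ℝ, (∀ i, v i = 0 ∨ v i = 1) ∧
      M = Matrix.of (fun i j => v i * v j)} with hS
  have hBmem : B ∈ BernoulliSet d ↔ B ∈ convexHull ℝ S := Iff.rfl
  rw [hBmem]
  constructor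
  · -- forward direction
    intro hB c a b hv
    set L : Matrix (Fin d) (Fin d) ℝ → ℝ := fun M =>
      ∑ i, a i * M i i +
        ∑ i, ∑ j ∈ Finset.univ.filter (fun j => i < j), b i j * M i j with hL
    have hconv : Convex ℝ {M : Matrix (Fin d) (Fin d) ℝ | -c ≤ L M} :=
      convex_halfSpace_ge (isLinearMap_coeff a b) (-c)
    have hsub : S ⊆ {M | -c ≤ L M} := by
      rintro M ⟨v, hv01, rfl⟩
      have := hv v hv01
      have hdiag : ∀ i, a i * (v i * v i) = a i * v i := by
        intro i; rcases hv01 i with h | h <;> rw [h] <;> ring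
      simp only [Set.mem_setOf_eq, hL, Matrix.of_apply, hdiag]
      linarith
    have := convexHull_min hsub hconv hB
    simp only [Set.mem_setOf_eq, hL] at this
    linarith
  · -- reverse direction
    intro hFarkas
    by_contra hB
    -- S is finite
    have hSfin : S.Finite := by
      have hsub : S ⊆ (fun v : Fin d → ℝ => Matrix.of fun i j => v i * v j) ''
          (Set.pi Set.univ fun _ => ({0, 1} : Set ℝ)) := by
        rintro M ⟨v, hv01, rfl⟩
        exact ⟨v, fun i _ => by rcases hv01 i with h | h <;> simp [h], rfl⟩
      refine Set.Finite.subset (Set.Finite.image _ (Set.Finite.pi fun _ => ?_)) hsub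
      exact (Set.finite_singleton 1).insert 0
    haveI : LocallyConvexSpace ℝ (Matrix (Fin d) (Fin d) ℝ) :=
      inferInstanceAs (LocallyConvexSpace ℝ (Fin d → Fin d → ℝ))
    have hclosed : IsClosed (convexHull ℝ S) := hSfin.isClosed_convexHull ℝ
    obtain ⟨f, u, hfB, hfS⟩ :=
      geometric_hahn_banach_point_closed (convex_convexHull ℝ S) hclosed hB
    -- expand f on matrices
    have hf : ∀ M : Matrix (Fin d) (Fin d) ℝ,
        f M = ∑ i, ∑ j, M i j * f (Matrix.single i j 1) := by
      intro M
      conv_lhs => rw [Matrix.matrix_eq_sum_single M]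
      rw [map_sum]
      refine Finset.sum_congr rfl fun i _ => ?_
      rw [map_sum]
      refine Finset.sum_congr rfl fun j _ => ?_
      rw [show Matrix.single i j (M i j) = M i j • Matrix.single i j 1 by
        rw [Matrix.smul_single, smul_eq_mul, mul_one], map_smul, smul_eq_mul]
    set g : Fin d → Fin d → ℝ := fun i j => f (Matrix.single i j 1) with hg
    have key := hFarkas (-u) (fun i => g i i) (fun i j => g i j + g j i) ?_
    · -- derive contradiction
      have hBsplit : ∑ i, ∑ j, g i j * B i j =
          ∑ i, g i i * B i i +
            ∑ i, ∑ j ∈ Finset.univ.filter (fun j => i < j), (g i j + g j i) * B i j :=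
        sum_split g B (fun i j => hsymm.apply i j)
      have hfB' : f B = ∑ i, ∑ j, g i j * B i j := by
        rw [hf B]
        exact Finset.sum_congr rfl fun i _ => Finset.sum_congr rfl fun j _ => by ring
      rw [hfB', hBsplit] at hfB
      linarith
    · intro v hv01
      have hmem : (Matrix.of fun i j => v i * v j) ∈ convexHull ℝ S :=
        subset_convexHull ℝ S ⟨v, hv01, rfl⟩
      have hlt := hfS _ hmem
      have hfv : f (Matrix.of fun i j => v i * v j) =
          ∑ i, g i i * v i +
            ∑ i, ∑ j ∈ Finset.univ.filter (fun j => i < j),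
              (g i j + g j i) * (v i * v j) := by
        rw [hf]
        have hsplit := sum_split g (fun i j => v i * v j) (fun i j => by ring)
        simp only [Matrix.of_apply]
        rw [show (∑ i, ∑ j, v i * v j * g i j) = ∑ i, ∑ j, g i j * (v i * v j) from
          Finset.sum_congr rfl fun i _ => Finset.sum_congr rfl fun j _ => by ring]
        rw [hsplit]
        congr 1
        refine Finset.sum_congr rfl fun i _ => ?_
        rcases hv01 i with h | h <;> simp [h]
      rw [hfv] at hlt
      linarith
end

section
/- Let d ≥ 2 and α₁, …, α_{d−1} ∈ ℝ, and let T be the d×d symmetric 'arrowhead' matrix with all diagonal entries equal to 1, with T_{id} = T_{di} = α_i for 1 ≤ i ≤ d−1, and with T_{ij} = 0 for all i ≠ j with 1 ≤ i, j ≤ d−1. Then (1/d)·T ∈ ℬ_d (i.e. T is a tail dependence matrix) if and only if α_i ≥ 0 for all 1 ≤ i ≤ d−1 and ∑_{i=1}^{d−1} α_i ≤ 1. -/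
theorem stmt10 (d : ℕ) (hd : 2 ≤ d) (α : Fin d → ℝ)
    (T : Matrix (Fin d) (Fin d) ℝ)
    (L : Fin d) (hL : L.val = d - 1)
    (hdiag : ∀ i, T i i = 1)
    (harrow : ∀ i, i ≠ L → T i L = α i ∧ T L i = α i)
    (hzero : ∀ i j, i ≠ j → i ≠ L → j ≠ L → T i j = 0) :
    ((1 : ℝ) / d) • T ∈ BernoulliSet d ↔
      ((∀ i, i ≠ L → 0 ≤ α i) ∧ (∑ i ∈ Finset.univ.erase L, α i) ≤ 1) := by
  constructor
  · intro h
    have hd0 : (0:ℝ) < (d:ℝ) := by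
      have : 0 < d := lt_of_lt_of_le two_pos hd
      exact_mod_cast this
    rw [BernoulliSet, convexHull_eq] at h
    obtain ⟨ι, t, w, z, hw0, hw1, hz, hcm⟩ := h
    rw [Finset.centerMass_eq_of_sum_1 _ _ hw1] at hcm
    choose v hv01 hvz using hz
    have entry : ∀ a b, ∑ k ∈ t, w k * (z k a b) = (1/d) * T a b := by
      intro a b
      have h2 := congrFun (congrFun hcm a) b
      simpa [Matrix.sum_apply, Matrix.smul_apply, smul_eq_mul] using h2
    have hznn : ∀ k (hk : k ∈ t), ∀ a b, 0 ≤ z k a b := by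
      intro k hk a b
      rw [hvz k hk]
      have h1 : (0:ℝ) ≤ v k hk a := by rcases hv01 k hk a with h | h <;> simp [h]
      have h2 : (0:ℝ) ≤ v k hk b := by rcases hv01 k hk b with h | h <;> simp [h]
      exact mul_nonneg h1 h2
    have htermnn : ∀ a b, ∀ k ∈ t, 0 ≤ w k * z k a b := fun a b k hk =>
      mul_nonneg (hw0 k hk) (hznn k hk a b)
    constructor
    · intro i hiL
      have e := entry i L
      rw [(harrow i hiL).1] at e
      have hs : 0 ≤ (1/d) * α i := e ▸ Finset.sum_nonneg (htermnn i L)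
      have h1d : 0 < 1/(d:ℝ) := by positivity
      by_contra hneg
      push_neg at hneg
      have := mul_neg_of_pos_of_neg h1d hneg
      linarith
    · -- key inequality per k
      have key : ∀ k ∈ t, w k * ∑ i ∈ Finset.univ.erase L, z k i L ≤ w k * z k L L := by
        intro k hk
        have hz' : ∀ a b, z k a b = v k hk a * v k hk b := by
          intro a b; rw [hvz k hk]; rfl
        rcases hv01 k hk L with h0 | h1
        · simp [hz', h0]
        · rcases le_or_gt (∑ i ∈ Finset.univ.erase L, v k hk i) 1 with hle | hgt
          · simp only [hz', h1, mul_one]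
            simpa using mul_le_mul_of_nonneg_left hle (hw0 k hk)
          · -- find two distinct ones
            set s := (Finset.univ.erase L).filter (fun i => v k hk i = 1) with hs
            have hsum : ∑ i ∈ Finset.univ.erase L, v k hk i = (s.card : ℝ) := by
              rw [← Finset.sum_filter_add_sum_filter_not (Finset.univ.erase L)
                (fun i => v k hk i = 1) (v k hk)]
              have e1 : ∑ i ∈ s, v k hk i = (s.card : ℝ) := by
                rw [Finset.sum_congr rfl (fun i hi => (Finset.mem_filter.mp hi).2)]
                simp [hs]
              have e2 : ∑ i ∈ (Finset.univ.erase L).filter (fun i => ¬ v k hk i = 1),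
                  v k hk i = 0 := by
                apply Finset.sum_eq_zero
                intro i hi
                rcases hv01 k hk i with h | h
                · exact h
                · exact absurd h (Finset.mem_filter.mp hi).2
              rw [e1, e2, add_zero]
            rw [hsum] at hgt
            have hcard : 1 < s.card := by exact_mod_cast hgt
            obtain ⟨a, ha, b, hb, hab⟩ := Finset.one_lt_card.mp hcard
            have haL : a ≠ L := (Finset.mem_erase.mp (Finset.mem_filter.mp ha).1).1
            have hbL : b ≠ L := (Finset.mem_erase.mp (Finset.mem_filter.mp hb).1).1
            have hTab : T a b = 0 := hzero a b hab haL hbL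
            have e := entry a b
            rw [hTab, mul_zero] at e
            have hle : w k * z k a b ≤ 0 := e ▸ Finset.single_le_sum (htermnn a b) hk
            have hzab : z k a b = 1 := by
              rw [hz', (Finset.mem_filter.mp ha).2, (Finset.mem_filter.mp hb).2, mul_one]
            rw [hzab, mul_one] at hle
            have hw : w k = 0 := le_antisymm hle (hw0 k hk)
            simp [hw]
      have e1 : ∑ i ∈ Finset.univ.erase L, (1/d) * α i
          = ∑ k ∈ t, w k * ∑ i ∈ Finset.univ.erase L, z k i L := by
        have step1 : ∑ i ∈ Finset.univ.erase L, (1/d) * α i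
            = ∑ i ∈ Finset.univ.erase L, ∑ k ∈ t, w k * z k i L := by
          apply Finset.sum_congr rfl
          intro i hi
          have hiL := (Finset.mem_erase.mp hi).1
          rw [entry i L, (harrow i hiL).1]
        rw [step1, Finset.sum_comm]
        exact Finset.sum_congr rfl fun k _ => (Finset.mul_sum _ _ _).symm
      have e2 : ∑ k ∈ t, w k * z k L L = 1/d := by
        rw [entry L L, hdiag L, mul_one]
      have hfin : ∑ i ∈ Finset.univ.erase L, (1/d) * α i ≤ 1/d := by
        rw [e1, ← e2]
        exact Finset.sum_le_sum key
      rw [← Finset.mul_sum] at hfin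
      have h1d : 0 < 1/(d:ℝ) := by positivity
      by_contra hgt
      push_neg at hgt
      have hlt := (mul_lt_mul_iff_right₀ h1d).mpr hgt
      rw [mul_one] at hlt
      linarith
  · intro h
    classical
    have hd0 : (0:ℝ) < (d:ℝ) := by
      have : 0 < d := lt_of_lt_of_le two_pos hd
      exact_mod_cast this
    obtain ⟨hα, hS1⟩ := h
    set S := ∑ i ∈ Finset.univ.erase L, α i with hS
    have hS0 : 0 ≤ S := Finset.sum_nonneg fun i hi => hα i (Finset.mem_erase.mp hi).1
    have hα1 : ∀ i, i ≠ L → α i ≤ 1 := fun i hi =>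
      le_trans (Finset.single_le_sum (fun j hj => hα j (Finset.mem_erase.mp hj).1)
        (Finset.mem_erase.mpr ⟨hi, Finset.mem_univ i⟩)) hS1
    set w : Fin d ⊕ Fin d → ℝ :=
      Sum.elim (fun i => if i = L then S/d else α i/d)
        (fun i => if i = L then (1-S)/d else (1-α i)/d) with hw
    set vv : Fin d ⊕ Fin d → Fin d → ℝ :=
      Sum.elim (fun i j => if i = L then 0 else if j = i ∨ j = L then (1:ℝ) else 0)
        (fun i j => if j = i then (1:ℝ) else 0) with hvv
    set z : Fin d ⊕ Fin d → Matrix (Fin d) (Fin d) ℝ :=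
      fun k => Matrix.of (fun a b => vv k a * vv k b) with hz
    have hw0 : ∀ k ∈ (Finset.univ : Finset (Fin d ⊕ Fin d)), 0 ≤ w k := by
      rintro (i | i) _
      · simp only [hw, Sum.elim_inl]
        split_ifs with hiL
        · positivity
        · exact div_nonneg (hα i hiL) (le_of_lt hd0)
      · simp only [hw, Sum.elim_inr]
        split_ifs with hiL
        · have : S ≤ 1 := hS1
          apply div_nonneg (by linarith) (le_of_lt hd0)
        · apply div_nonneg (by linarith [hα1 i hiL]) (le_of_lt hd0)
    have hw1 : ∑ k ∈ Finset.univ, w k = 1 := by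
      have hdcast : ((d - 1 : ℕ) : ℝ) = (d:ℝ) - 1 := by
        have h1 : 1 ≤ d := le_trans one_le_two hd
        push_cast [Nat.cast_sub h1]
        ring
      have hcard : (Finset.univ.erase L).card = d - 1 := by
        rw [Finset.card_erase_of_mem (Finset.mem_univ L)]
        simp
      rw [Fintype.sum_sum_type]
      have e1 : ∑ i : Fin d, w (Sum.inl i) = S/d + S/d := by
        rw [← Finset.add_sum_erase _ _ (Finset.mem_univ L)]
        simp only [hw, Sum.elim_inl, if_pos rfl]
        congr 1
        rw [Finset.sum_congr rfl (fun i hi => if_neg (Finset.mem_erase.mp hi).1),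
          ← Finset.sum_div]
      have e2 : ∑ i : Fin d, w (Sum.inr i) = (1-S)/d + ((d:ℝ) - 1 - S)/d := by
        rw [← Finset.add_sum_erase _ _ (Finset.mem_univ L)]
        simp only [hw, Sum.elim_inr, if_pos rfl]
        congr 1
        rw [Finset.sum_congr rfl (fun i hi => if_neg (Finset.mem_erase.mp hi).1),
          ← Finset.sum_div, Finset.sum_sub_distrib, Finset.sum_const, hcard,
          nsmul_eq_mul, mul_one, hdcast]
      rw [e1, e2]
      field_simp
      ring
    rw [BernoulliSet, convexHull_eq]
    refine ⟨Fin d ⊕ Fin d, Finset.univ, w, z, hw0, hw1, ?_, ?_⟩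
    · rintro (i | i) _
      · exact ⟨vv (Sum.inl i), fun j => by
          simp only [hvv, Sum.elim_inl]; split_ifs <;> simp, rfl⟩
      · exact ⟨vv (Sum.inr i), fun j => by
          simp only [hvv, Sum.elim_inr]; split_ifs <;> simp, rfl⟩
    · rw [Finset.centerMass_eq_of_sum_1 _ _ hw1]
      ext a b
      have lhs_eq : (∑ k ∈ Finset.univ, w k • z k) a b
          = ∑ k : Fin d ⊕ Fin d, w k * (vv k a * vv k b) := by
        simp [Matrix.sum_apply, hz]
      rw [Matrix.smul_apply, lhs_eq, Fintype.sum_sum_type, smul_eq_mul]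
      have hmemerase : ∀ i : Fin d, i ≠ L → i ∈ Finset.univ.erase L := fun i hi =>
        Finset.mem_erase.mpr ⟨hi, Finset.mem_univ i⟩
      have sum2 : ∑ i : Fin d, w (Sum.inr i) * (vv (Sum.inr i) a * vv (Sum.inr i) b)
          = if a = b then w (Sum.inr a) else 0 := by
        by_cases hab : a = b
        · subst hab
          rw [if_pos rfl]
          have e0 : w (Sum.inr a) = w (Sum.inr a) * (vv (Sum.inr a) a * vv (Sum.inr a) a) := by
            simp [hvv]
          rw [e0]
          apply Finset.sum_eq_single_of_mem a (Finset.mem_univ a)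
          intro i _ hia
          simp [hvv, Ne.symm hia]
        · rw [if_neg hab]
          apply Finset.sum_eq_zero
          intro i _
          by_cases hai : a = i
          · subst hai
            simp [hvv, Ne.symm hab]
          · simp [hvv, hai]
      have sum1 : ∑ i : Fin d, w (Sum.inl i) * (vv (Sum.inl i) a * vv (Sum.inl i) b)
          = ∑ i ∈ Finset.univ.erase L, (α i/(d:ℝ)) *
            ((if a = i ∨ a = L then (1:ℝ) else 0) * (if b = i ∨ b = L then (1:ℝ) else 0)) := by
        rw [← Finset.add_sum_erase _ _ (Finset.mem_univ L)]
        simp only [hw, hvv, Sum.elim_inl, eq_self_iff_true, if_true, mul_zero, zero_mul, zero_add]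
        exact Finset.sum_congr rfl fun i hi => by
          rw [if_neg (Finset.mem_erase.mp hi).1, if_neg (Finset.mem_erase.mp hi).1,
            if_neg (Finset.mem_erase.mp hi).1]
      rw [sum1, sum2]
      by_cases haL : a = L
      · by_cases hbL : b = L
        · have hab : a = b := haL.trans hbL.symm
          have e : ∑ i ∈ Finset.univ.erase L, (α i/(d:ℝ)) *
              ((if a = i ∨ a = L then (1:ℝ) else 0) * (if b = i ∨ b = L then (1:ℝ) else 0))
              = S/d := by
            rw [Finset.sum_congr rfl (fun i _ => by
              rw [if_pos (Or.inr haL), if_pos (Or.inr hbL), mul_one, mul_one]), ← Finset.sum_div]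
          rw [e, if_pos hab]
          simp only [hw, Sum.elim_inr, if_pos haL]
          rw [haL, hbL, hdiag L]
          field_simp
          ring
        · have hab : ¬ a = b := fun h => hbL (h.symm.trans haL)
          rw [Finset.sum_eq_single_of_mem b (hmemerase b hbL) (fun i _ hib => by
            rw [if_neg (not_or.mpr ⟨fun h => hib h.symm, hbL⟩), mul_zero, mul_zero])]
          rw [if_pos (Or.inr haL), if_pos (Or.inl rfl), mul_one, mul_one, if_neg hab, add_zero,
            haL, (harrow b hbL).2]
          ring
      · by_cases hbL : b = L
        · have hab : ¬ a = b := fun h => haL (h.trans hbL)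
          rw [Finset.sum_eq_single_of_mem a (hmemerase a haL) (fun i _ hia => by
            rw [if_neg (not_or.mpr ⟨fun h => hia h.symm, haL⟩), zero_mul, mul_zero])]
          rw [if_pos (Or.inl rfl), if_pos (Or.inr hbL), mul_one, mul_one, if_neg hab, add_zero,
            hbL, (harrow a haL).1]
          ring
        · by_cases hab : a = b
          · rw [Finset.sum_eq_single_of_mem a (hmemerase a haL) (fun i _ hia => by
              rw [if_neg (not_or.mpr ⟨fun h => hia h.symm, haL⟩), zero_mul, mul_zero])]
            rw [if_pos (Or.inl rfl), if_pos (Or.inl hab.symm), mul_one, mul_one, if_pos hab]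
            simp only [hw, Sum.elim_inr, if_neg haL]
            rw [← hab, hdiag a]
            field_simp
            ring
          · rw [Finset.sum_eq_zero (fun i _ => ?_), zero_add, if_neg hab,
              hzero a b hab haL hbL, mul_zero]
            by_cases hai : a = i
            · rw [if_neg (not_or.mpr ⟨fun h => hab (hai.trans h.symm), hbL⟩), mul_zero, mul_zero]
            · rw [if_neg (not_or.mpr ⟨hai, haL⟩), zero_mul, mul_zero]
end

section
/- Let T be the 3×3 symmetric matrix with all diagonal entries equal to 1, with T_{12} = T_{21} = T_{23} = T_{32} = 2/3, and with T_{13} = T_{31} = 0. Then (1/3)·T ∉ ℬ_3; that is, T is not a tail dependence matrix (even though T is positive definite). -/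
theorem stmt11 (T : Matrix (Fin 3) (Fin 3) ℝ)
    (hT : T = !![1, 2/3, 0; 2/3, 1, 2/3; 0, 2/3, 1]) :
    T.PosDef ∧ ((1 : ℝ) / 3) • T ∉ BernoulliSet 3 := by
  subst hT
  constructor
  · refine Matrix.PosDef.of_dotProduct_mulVec_pos ?_ ?_
    · ext i j
      fin_cases i <;> fin_cases j <;>
        simp [Matrix.conjTranspose, Matrix.transpose]
    · intro x hx
      have hx' : ∃ i, x i ≠ 0 := Function.ne_iff.mp hx
      have hq : ∀ a : ℝ, 0 ≤ a → a ≠ 0 → 0 < a := fun a h1 h2 => h1.lt_of_ne' h2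
      simp only [Matrix.mulVec, dotProduct, Fin.sum_univ_three]
      norm_num [Matrix.cons_val_zero, Matrix.cons_val_one, Matrix.cons_val_two, Matrix.vecHead, Matrix.vecTail]
      have h3 : x 0 ≠ 0 ∨ x 1 ≠ 0 ∨ x 2 ≠ 0 := by
        obtain ⟨i, hi⟩ := hx'
        fin_cases i
        exacts [Or.inl hi, Or.inr (Or.inl hi), Or.inr (Or.inr hi)]
      rcases h3 with h | h | h <;>
        nlinarith [mul_self_pos.mpr h, sq_nonneg (x 0 + 2/3 * x 1),
          sq_nonneg (x 2 + 2/3 * x 1), sq_nonneg (x 1), sq_nonneg (x 0), sq_nonneg (x 2)]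
  · intro hmem
    set C : Set (Matrix (Fin 3) (Fin 3) ℝ) :=
      {M | M 0 1 + M 1 2 - M 0 2 - M 1 1 ≤ 0} with hC
    have hconv : Convex ℝ C := by
      intro M hM N hN a b ha hb hab
      simp only [hC, Set.mem_setOf_eq, Matrix.add_apply, Matrix.smul_apply,
        smul_eq_mul] at *
      nlinarith
    have hsub : {M : Matrix (Fin 3) (Fin 3) ℝ | ∃ v : Fin 3 → ℝ,
        (∀ i, v i = 0 ∨ v i = 1) ∧ M = Matrix.of (fun i j => v i * v j)} ⊆ C := by
      rintro M ⟨v, hv, rfl⟩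
      simp only [hC, Set.mem_setOf_eq, Matrix.of_apply]
      rcases hv 0 with h0 | h0 <;> rcases hv 1 with h1 | h1 <;>
        rcases hv 2 with h2 | h2 <;> rw [h0, h1, h2] <;> norm_num
    have := convexHull_min hsub hconv hmem
    simp only [hC, Set.mem_setOf_eq, Matrix.smul_apply, smul_eq_mul] at this
    norm_num [Matrix.cons_val_two, Matrix.vecHead, Matrix.vecTail] at this
end

section
/- Let d ≥ 2 and let α, β ∈ ℝ with 0 ≤ β ≤ α ≤ 1. Let B = (α − β)·I_d + β·J_d be the d×d matrix with all diagonal entries equal to α and all off-diagonal entries equal to β. Then B ∈ ℬ_d if and only if β ≥ ((2αd − ⌊αd⌋ − 1)·⌊αd⌋)/(d(d−1)), where ⌊αd⌋ denotes the floor of the real number αd. -/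
open Finset


open Finset

section Counting

variable {γ : Type*} [DecidableEq γ]

lemma filter_powersetCard_mem {s : Finset γ} {a : γ} (ha : a ∈ s) (n : ℕ) :
    (s.powersetCard (n+1)).filter (fun S => a ∈ S)
      = ((s.erase a).powersetCard n).image (insert a) := by
  ext T
  simp only [mem_filter, mem_powersetCard, mem_image]
  constructor
  · rintro ⟨⟨hTs, hTc⟩, haT⟩
    refine ⟨T.erase a, ⟨erase_subset_erase a hTs, ?_⟩, insert_erase haT⟩
    rw [card_erase_of_mem haT, hTc]
    rfl
  · rintro ⟨S, ⟨hSs, hSc⟩, rfl⟩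
    have haS : a ∉ S := fun h => (notMem_erase a s) (hSs h)
    exact ⟨⟨insert_subset ha (hSs.trans (erase_subset _ _)),
      by rw [card_insert_of_notMem haS, hSc]⟩, mem_insert_self _ _⟩

lemma card_filter_powersetCard_mem {s : Finset γ} {a : γ} (ha : a ∈ s) (n : ℕ) :
    ((s.powersetCard (n+1)).filter (fun S => a ∈ S)).card = (s.card - 1).choose n := by
  rw [filter_powersetCard_mem ha, card_image_of_injOn, card_powersetCard,
    card_erase_of_mem ha]
  intro S hS S' hS' h
  have haS : a ∉ S := fun hc => (notMem_erase a s) ((mem_powersetCard.1 hS).1 hc)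
  have haS' : a ∉ S' := fun hc => (notMem_erase a s) ((mem_powersetCard.1 hS').1 hc)
  rw [← erase_insert haS, h, erase_insert haS']

lemma card_filter_powersetCard_mem_two {s : Finset γ} {a b : γ}
    (ha : a ∈ s) (hb : b ∈ s) (hab : a ≠ b) (n : ℕ) :
    ((s.powersetCard (n+2)).filter (fun S => a ∈ S ∧ b ∈ S)).card
      = (s.card - 2).choose n := by
  have h1 : (s.powersetCard (n+2)).filter (fun S => a ∈ S ∧ b ∈ S)
      = ((s.powersetCard (n+2)).filter (fun S => a ∈ S)).filter (fun S => b ∈ S) := by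
    rw [filter_filter]
  rw [h1, filter_powersetCard_mem ha]
  have h2 : (((s.erase a).powersetCard (n+1)).image (insert a)).filter (fun S => b ∈ S)
      = (((s.erase a).powersetCard (n+1)).filter (fun S => b ∈ S)).image (insert a) := by
    ext T
    simp only [mem_filter, mem_image]
    constructor
    · rintro ⟨⟨S, hS, rfl⟩, hbT⟩
      refine ⟨S, ⟨hS, ?_⟩, rfl⟩
      rcases mem_insert.1 hbT with h | h
      · exact absurd h.symm hab
      · exact h
    · rintro ⟨S, ⟨hS, hbS⟩, rfl⟩
      exact ⟨⟨S, hS, rfl⟩, mem_insert_of_mem hbS⟩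
  rw [h2, card_image_of_injOn,
    card_filter_powersetCard_mem (mem_erase.2 ⟨hab.symm, hb⟩), card_erase_of_mem ha]
  · have h3 : #s - 1 - 1 = #s - 2 := by omega
    rw [h3]
  · intro S hS S' hS' h
    have haS : a ∉ S := fun hc =>
      (notMem_erase a s) ((mem_powersetCard.1 (mem_filter.1 hS).1).1 hc)
    have haS' : a ∉ S' := fun hc =>
      (notMem_erase a s) ((mem_powersetCard.1 (mem_filter.1 hS').1).1 hc)
    rw [← erase_insert haS, h, erase_insert haS']

end Counting



noncomputable section BM

def chiv (d : ℕ) (S : Finset (Fin d)) : Fin d → ℝ := fun i => if i ∈ S then 1 else 0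

def Mmat (d n : ℕ) : Matrix (Fin d) (Fin d) ℝ :=
  ((d.choose n : ℝ))⁻¹ • ∑ S ∈ (univ : Finset (Fin d)).powersetCard n,
    Matrix.of (fun i j => chiv d S i * chiv d S j)

lemma Mmat_apply (d n : ℕ) (i j : Fin d) :
    Mmat d n i j = ((d.choose n : ℝ))⁻¹ *
      ((((univ : Finset (Fin d)).powersetCard n).filter (fun S => i ∈ S ∧ j ∈ S)).card : ℝ) := by
  have h : ∀ S : Finset (Fin d), chiv d S i * chiv d S j
      = if i ∈ S ∧ j ∈ S then (1:ℝ) else 0 := by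
    intro S
    by_cases hi : i ∈ S <;> by_cases hj : j ∈ S <;> simp [chiv, hi, hj]
  simp only [Mmat, Matrix.smul_apply, smul_eq_mul]
  congr 1
  rw [Matrix.sum_apply]
  simp only [Matrix.of_apply]
  rw [Finset.sum_congr rfl (fun S _ => h S), Finset.sum_boole]

lemma Mmat_mem (d n : ℕ) : Mmat d n ∈ BernoulliSet d := by
  rcases le_or_gt n d with hn | hn
  · have hne : ((univ : Finset (Fin d)).powersetCard n).Nonempty :=
      powersetCard_nonempty.2 (by simpa using hn)
    have hcm : Mmat d n = ((univ : Finset (Fin d)).powersetCard n).centerMass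
        (fun _ => (1:ℝ)) (fun S => Matrix.of (fun i j => chiv d S i * chiv d S j)) := by
      rw [Finset.centerMass]
      simp only [Finset.sum_const, nsmul_eq_mul, mul_one, one_smul, Mmat,
        card_powersetCard, card_univ, Fintype.card_fin]
    rw [hcm]
    refine Finset.centerMass_mem_convexHull _ (fun _ _ => zero_le_one) ?_ ?_
    · rw [Finset.sum_const]
      simp only [nsmul_eq_mul, mul_one]
      exact_mod_cast Finset.card_pos.2 hne
    · intro S _
      exact ⟨chiv d S, fun i => by by_cases h : i ∈ S <;> simp [chiv, h], rfl⟩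
  · have h0 : Mmat d n = 0 := by
      rw [Mmat, powersetCard_eq_empty.2 (by simpa using hn)]
      simp
    rw [h0]
    refine subset_convexHull ℝ _ ⟨0, fun i => Or.inl rfl, ?_⟩
    ext i j
    simp

lemma Mmat_diag {d n : ℕ} (hn : n ≤ d) (i : Fin d) : Mmat d n i i = n / d := by
  cases n with
  | zero =>
    rw [Mmat_apply]
    simp [powersetCard_zero, Finset.filter_singleton]
  | succ n =>
    have hd1 : 1 ≤ d := le_trans (Nat.succ_le_succ (Nat.zero_le n)) hn
    rw [Mmat_apply]
    simp only [and_self]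
    rw [card_filter_powersetCard_mem (mem_univ i), card_univ, Fintype.card_fin]
    have hid : (d - 1) + 1 = d := by omega
    have hnat : d * (d - 1).choose n = d.choose (n+1) * (n+1) := by
      have := Nat.add_one_mul_choose_eq (d-1) n
      rwa [hid] at this
    have hC : (0:ℝ) < (d.choose (n+1) : ℝ) := by
      exact_mod_cast Nat.choose_pos hn
    have hd0 : (0:ℝ) < (d : ℝ) := by exact_mod_cast hd1
    have hR : (d:ℝ) * ((d-1).choose n : ℝ) = (d.choose (n+1) : ℝ) * ((n:ℝ)+1) := by
      exact_mod_cast congrArg (Nat.cast : ℕ → ℝ) hnat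
    field_simp
    push_cast
    nlinarith [hR]

lemma Mmat_offdiag {d n : ℕ} (hn : n ≤ d) {i j : Fin d} (hij : i ≠ j) :
    Mmat d n i j = ((n:ℝ) * ((n:ℝ) - 1)) / ((d:ℝ) * ((d:ℝ) - 1)) := by
  match n with
  | 0 =>
    rw [Mmat_apply]
    simp [powersetCard_zero, Finset.filter_singleton]
  | 1 =>
    rw [Mmat_apply]
    have : (((univ : Finset (Fin d)).powersetCard 1).filter
        (fun S => i ∈ S ∧ j ∈ S)) = ∅ := by
      rw [Finset.eq_empty_iff_forall_notMem]
      intro S hS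
      rw [mem_filter, mem_powersetCard] at hS
      obtain ⟨⟨_, hc⟩, hi, hj⟩ := hS
      rw [card_eq_one] at hc
      obtain ⟨x, rfl⟩ := hc
      rw [mem_singleton] at hi hj
      exact hij (hi.trans hj.symm)
    rw [this]
    simp
  | (n+2) =>
    have hd2 : 2 ≤ d := le_trans (by omega) hn
    rw [Mmat_apply, card_filter_powersetCard_mem_two (mem_univ i) (mem_univ j) hij,
      card_univ, Fintype.card_fin]
    have h1 : (d - 2) + 1 = d - 1 := by omega
    have h2 : (d - 1) + 1 = d := by omega
    have hnat1 : (d-1) * (d - 2).choose n = (d-1).choose (n+1) * (n+1) := by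
      have := Nat.add_one_mul_choose_eq (d-2) n
      rwa [h1] at this
    have hnat2 : d * (d - 1).choose (n+1) = d.choose (n+2) * (n+2) := by
      have := Nat.add_one_mul_choose_eq (d-1) (n+1)
      rwa [h2] at this
    have hC : (0:ℝ) < (d.choose (n+2) : ℝ) := by exact_mod_cast Nat.choose_pos hn
    have hd0 : (0:ℝ) < (d : ℝ) := by exact_mod_cast (by omega : 0 < d)
    have hd1 : (0:ℝ) < (d : ℝ) - 1 := by
      have : (2:ℝ) ≤ (d:ℝ) := by exact_mod_cast hd2
      linarith
    have hR1 : ((d:ℝ)-1) * ((d-2).choose n : ℝ) = ((d-1).choose (n+1) : ℝ) * ((n:ℝ)+1) := by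
      have := congrArg (Nat.cast : ℕ → ℝ) hnat1
      push_cast at this
      rw [Nat.cast_sub (by omega : 1 ≤ d)] at this
      push_cast at this
      linarith [this]
    have hR2 : (d:ℝ) * ((d-1).choose (n+1) : ℝ) = (d.choose (n+2) : ℝ) * ((n:ℝ)+2) := by
      exact_mod_cast congrArg (Nat.cast : ℕ → ℝ) hnat2
    field_simp
    push_cast
    nlinarith [hR1, hR2]

lemma Mmat_zero_of_lt {d n : ℕ} (h : d < n) : Mmat d n = 0 := by
  rw [Mmat, powersetCard_eq_empty.2 (by simpa using h)]
  simp

lemma int_consec (z : ℤ) : 0 ≤ z * (z - 1) := by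
  rcases le_or_gt z 0 with h | h <;> nlinarith

end BM

theorem stmt13 (d : ℕ) (hd : 2 ≤ d) (α β : ℝ)
    (hβ : 0 ≤ β) (hβα : β ≤ α) (hα : α ≤ 1)
    (B : Matrix (Fin d) (Fin d) ℝ)
    (hB : ∀ i j, B i j = if i = j then α else β) :
    B ∈ BernoulliSet d ↔
      ((2 * α * d - (↑⌊α * (d : ℝ)⌋ : ℝ) - 1) * (↑⌊α * (d : ℝ)⌋ : ℝ)) /
          ((d : ℝ) * ((d : ℝ) - 1)) ≤ β := by
  have hd0 : (0:ℝ) < d := by exact_mod_cast (by omega : 0 < d)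
  have hd1 : (1:ℝ) < d := by exact_mod_cast hd
  have hdd : (0:ℝ) < (d:ℝ) * ((d:ℝ) - 1) := by nlinarith
  set K : ℝ := ((⌊α * (d:ℝ)⌋ : ℤ) : ℝ) with hK
  constructor
  · intro hmem
    rw [BernoulliSet, _root_.convexHull_eq] at hmem
    obtain ⟨ι, tt, w, z, hw0, hw1, hz, hcm⟩ := hmem
    choose! v hv01 hveq using hz
    have hBsum : ∀ i j, B i j = ∑ a ∈ tt, w a * (v a i * v a j) := by
      intro i j
      rw [← hcm, Finset.centerMass, hw1, inv_one, one_smul, Matrix.sum_apply]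
      refine Finset.sum_congr rfl fun a ha => ?_
      rw [Matrix.smul_apply, hveq a ha, smul_eq_mul, Matrix.of_apply]
    have hvsq : ∀ a ∈ tt, ∀ i, v a i * v a i = v a i := by
      intro a ha i
      rcases hv01 a ha i with h | h <;> rw [h] <;> ring
    have hdiagsum : (d:ℝ) * α = ∑ a ∈ tt, w a * (∑ i, v a i) := by
      have h1 : ∑ i : Fin d, B i i = (d:ℝ) * α := by
        simp [hB, Finset.sum_const, card_univ, mul_comm]
      rw [← h1]
      simp_rw [hBsum]
      rw [Finset.sum_comm]
      refine Finset.sum_congr rfl fun a ha => ?_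
      rw [← Finset.mul_sum]
      congr 1
      exact Finset.sum_congr rfl fun i _ => hvsq a ha i
    have hfullsum : (d:ℝ) * α + (d:ℝ)*((d:ℝ)-1)*β
        = ∑ a ∈ tt, w a * ((∑ i, v a i) * (∑ i, v a i)) := by
      have hrow : ∀ i : Fin d, ∑ j, B i j = α + ((d:ℝ)-1)*β := by
        intro i
        simp only [hB]
        have h2 : ∀ j : Fin d, (if i = j then α else β)
            = (if i = j then α - β else 0) + β := by
          intro j; split <;> ring
        simp_rw [h2]
        rw [Finset.sum_add_distrib, Finset.sum_ite_eq, if_pos (mem_univ i),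
          Finset.sum_const, card_univ, Fintype.card_fin]
        simp only [nsmul_eq_mul]
        ring
      have h1 : ∑ i : Fin d, ∑ j, B i j = (d:ℝ) * α + (d:ℝ)*((d:ℝ)-1)*β := by
        simp_rw [hrow]
        rw [Finset.sum_const, card_univ, Fintype.card_fin]
        simp only [nsmul_eq_mul]
        ring
      rw [← h1]
      calc ∑ i : Fin d, ∑ j, B i j
          = ∑ i : Fin d, ∑ j, ∑ a ∈ tt, w a * (v a i * v a j) := by simp_rw [hBsum]
        _ = ∑ i : Fin d, ∑ a ∈ tt, ∑ j, w a * (v a i * v a j) := by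
            exact Finset.sum_congr rfl fun i _ => Finset.sum_comm
        _ = ∑ a ∈ tt, ∑ i : Fin d, ∑ j, w a * (v a i * v a j) := Finset.sum_comm
        _ = ∑ a ∈ tt, w a * ((∑ i, v a i) * (∑ i, v a i)) := by
            refine Finset.sum_congr rfl fun a _ => ?_
            rw [Finset.sum_mul_sum, Finset.mul_sum]
            exact Finset.sum_congr rfl fun i _ => (Finset.mul_sum _ _ _).symm
    have hNint : ∀ a ∈ tt, ∃ zz : ℤ, (∑ i, v a i) = (zz:ℝ) := by
      intro a ha
      refine ⟨((univ : Finset (Fin d)).filter (fun i => v a i = 1)).card, ?_⟩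
      rw [← Finset.sum_filter_add_sum_filter_not univ (fun i => v a i = 1)]
      have h1 : ∑ i ∈ (univ : Finset (Fin d)).filter (fun i => v a i = 1), v a i
          = (((univ : Finset (Fin d)).filter (fun i => v a i = 1)).card : ℝ) := by
        rw [Finset.sum_congr rfl (fun i hi => (Finset.mem_filter.1 hi).2),
          Finset.sum_const, nsmul_eq_mul, mul_one]
      have h2 : ∑ i ∈ (univ : Finset (Fin d)).filter (fun i => ¬ v a i = 1), v a i = 0 := by
        refine Finset.sum_eq_zero fun i hi => ?_
        rcases hv01 a ha i with h | h
        · exact h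
        · exact absurd h (Finset.mem_filter.1 hi).2
      rw [h1, h2, add_zero]
      push_cast
      ring
    have hkey : ∀ a ∈ tt, w a * (2*K*(∑ i, v a i) - K*K - K)
        ≤ w a * ((∑ i, v a i) * (∑ i, v a i) - (∑ i, v a i)) := by
      intro a ha
      refine mul_le_mul_of_nonneg_left ?_ (hw0 a ha)
      obtain ⟨zz, hzz⟩ := hNint a ha
      have hq : (0:ℝ) ≤ ((zz - ⌊α*(d:ℝ)⌋ : ℤ) : ℝ) * ((zz - ⌊α*(d:ℝ)⌋ - 1 : ℤ) : ℝ) := by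
        exact_mod_cast int_consec (zz - ⌊α*(d:ℝ)⌋)
      push_cast at hq
      rw [hzz]
      nlinarith [hq]
    have hsum_ineq := Finset.sum_le_sum hkey
    have hL : ∑ a ∈ tt, w a * (2*K*(∑ i, v a i) - K*K - K)
        = 2*K*((d:ℝ)*α) - K*K - K := by
      have h2 : ∀ a, w a * (2*K*(∑ i, v a i) - K*K - K)
          = 2*K*(w a * (∑ i, v a i)) - (K*K + K) * w a := fun a => by ring
      simp_rw [h2]
      rw [Finset.sum_sub_distrib, ← Finset.mul_sum, ← Finset.mul_sum, ← hdiagsum, hw1]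
      ring
    have hR : ∑ a ∈ tt, w a * ((∑ i, v a i) * (∑ i, v a i) - (∑ i, v a i))
        = (d:ℝ)*((d:ℝ)-1)*β := by
      have h2 : ∀ a, w a * ((∑ i, v a i) * (∑ i, v a i) - (∑ i, v a i))
          = w a * ((∑ i, v a i) * (∑ i, v a i)) - w a * (∑ i, v a i) := fun a => by ring
      simp_rw [h2]
      rw [Finset.sum_sub_distrib, ← hfullsum, ← hdiagsum]
      ring
    rw [hL, hR] at hsum_ineq
    rw [div_le_iff₀ hdd]
    nlinarith [hsum_ineq]
  · intro hβ'
    have hα0 : (0:ℝ) ≤ α := le_trans hβ hβα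
    have hm0 : (0:ℝ) ≤ α * d := mul_nonneg hα0 hd0.le
    have hmd : α * (d:ℝ) ≤ d := by nlinarith
    have hfl0 : 0 ≤ ⌊α * (d:ℝ)⌋ := Int.floor_nonneg.2 hm0
    set k : ℕ := ⌊α * (d:ℝ)⌋.toNat with hkdef
    have hkK : (k:ℝ) = K := by
      rw [hkdef, hK]
      exact_mod_cast congrArg (Int.cast : ℤ → ℝ) (Int.toNat_of_nonneg hfl0)
    have hkm : (k:ℝ) ≤ α * d := by rw [hkK]; exact Int.floor_le _
    have hmk1 : α * d < (k:ℝ) + 1 := by rw [hkK]; exact Int.lt_floor_add_one _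
    have hkd : k ≤ d := by
      have h : (k:ℝ) ≤ (d:ℝ) := le_trans hkm hmd
      exact_mod_cast h
    have hLs : K*(2*(α*d) - K - 1) ≤ (d:ℝ)*((d:ℝ)-1)*β := by
      rw [div_le_iff₀ hdd] at hβ'
      nlinarith [hβ']
    have hsU : (d:ℝ)*((d:ℝ)-1)*β ≤ (α*d)*((d:ℝ)-1) := by nlinarith
    obtain ⟨t, ht0, ht1, hkey⟩ : ∃ t : ℝ, 0 ≤ t ∧ t ≤ 1 ∧
        K*(2*(α*d) - K - 1) + t * ((α*d)*((d:ℝ)-1) - K*(2*(α*d) - K - 1))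
          = (d:ℝ)*((d:ℝ)-1)*β := by
      refine ⟨((d:ℝ)*((d:ℝ)-1)*β - K*(2*(α*d) - K - 1)) /
          ((α*d)*((d:ℝ)-1) - K*(2*(α*d) - K - 1)), ?_, ?_, ?_⟩
      · exact div_nonneg (by linarith) (by linarith)
      · rcases eq_or_ne ((α*d)*((d:ℝ)-1) - K*(2*(α*d) - K - 1)) 0 with h | h
        · rw [h, div_zero]
          exact zero_le_one
        · have hpos : 0 < (α*d)*((d:ℝ)-1) - K*(2*(α*d) - K - 1) :=
            lt_of_le_of_ne (by linarith) (Ne.symm h)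
          rw [div_le_one hpos]
          linarith
      · rcases eq_or_ne ((α*d)*((d:ℝ)-1) - K*(2*(α*d) - K - 1)) 0 with h | h
        · rw [h, mul_zero, add_zero]
          have h2 := sub_eq_zero.1 h
          linarith [hLs, hsU]
        · rw [div_mul_cancel₀ _ h]
          ring
    have hp0 : 0 ≤ α*d - (k:ℝ) := by linarith
    have hp1 : α*d - (k:ℝ) ≤ 1 := by linarith
    have hrep : B = ((1-t)*(1-(α*d-(k:ℝ)))) • Mmat d k
        + ((1-t)*(α*d-(k:ℝ))) • Mmat d (k+1)
        + (t*(1-α)) • Mmat d 0 + (t*α) • Mmat d d := by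
      ext i j
      simp only [Matrix.add_apply, Matrix.smul_apply, smul_eq_mul, hB]
      rcases eq_or_ne i j with rfl | hij
      · rw [if_pos rfl, Mmat_diag hkd i, Mmat_diag (Nat.zero_le d) i,
          Mmat_diag (le_refl d) i]
        rcases lt_or_eq_of_le hkd with hlt | heq
        · rw [Mmat_diag hlt i]
          push_cast
          rw [hkK]
          field_simp
          ring
        · have hkr : (k:ℝ) = (d:ℝ) := by exact_mod_cast heq
          have hα1 : α = 1 := by
            refine mul_right_cancel₀ hd0.ne' ?_
            rw [one_mul]
            exact le_antisymm hmd (by linarith [hkm, hkr])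
          rw [Mmat_zero_of_lt (by omega), Matrix.zero_apply, hkr, hα1]
          field_simp
          ring
      · rw [if_neg hij, Mmat_offdiag hkd hij, Mmat_offdiag (Nat.zero_le d) hij,
          Mmat_offdiag (le_refl d) hij]
        rcases lt_or_eq_of_le hkd with hlt | heq
        · rw [Mmat_offdiag hlt hij]
          have hmain : β = ((1-t)*(1-(α*d-K))*(K*(K-1))
              + (1-t)*(α*d-K)*((K+1)*K) + (t*α)*((d:ℝ)*((d:ℝ)-1)))
                / ((d:ℝ)*((d:ℝ)-1)) := by
            rw [eq_div_iff hdd.ne']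
            linear_combination -hkey
          push_cast
          rw [hkK, hmain]
          field_simp
          ring
        · have hkr : (k:ℝ) = (d:ℝ) := by exact_mod_cast heq
          have hKd : K = (d:ℝ) := by rw [← hkK, hkr]
          have hα1 : α = 1 := by
            refine mul_right_cancel₀ hd0.ne' ?_
            rw [one_mul]
            exact le_antisymm hmd (by linarith [hkm, hkr])
          have hβ1 : β = 1 := by
            rw [hKd, hα1] at hLs
            have hβle : β ≤ 1 := le_trans hβα hα1.le
            have h1 : (d:ℝ)*((d:ℝ)-1) * 1 ≤ (d:ℝ)*((d:ℝ)-1) * β := by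
              ring_nf
              ring_nf at hLs
              linarith [hLs]
            exact le_antisymm hβle ((mul_le_mul_iff_right₀ hdd).1 h1)
          rw [Mmat_zero_of_lt (by omega), Matrix.zero_apply, hkr, hα1, hβ1]
          have hne : (d:ℝ) - 1 ≠ 0 := by linarith
          field_simp
          ring
    rw [hrep]
    have hconv : Convex ℝ (BernoulliSet d) := convex_convexHull ℝ _
    have hmem4 := hconv.sum_mem (t := (univ : Finset (Fin 4)))
      (w := ![(1-t)*(1-(α*d-(k:ℝ))), (1-t)*(α*d-(k:ℝ)), t*(1-α), t*α])
      (z := ![Mmat d k, Mmat d (k+1), Mmat d 0, Mmat d d])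
      (fun a _ => by
        fin_cases a
        · exact mul_nonneg (by linarith) (by linarith)
        · exact mul_nonneg (by linarith) hp0
        · exact mul_nonneg ht0 (by linarith)
        · exact mul_nonneg ht0 hα0)
      (by
        rw [Fin.sum_univ_four]
        show (1-t)*(1-(α*(d:ℝ)-(k:ℝ))) + (1-t)*(α*(d:ℝ)-(k:ℝ)) + t*(1-α) + t*α = 1
        ring)
      (fun a _ => by fin_cases a <;> exact Mmat_mem d _)
    rw [Fin.sum_univ_four] at hmem4
    simpa using hmem4
end

section
/- Let d ≥ 2 and β ∈ ℝ, and let T = (1 − β)·I_d + β·J_d be the d×d matrix with all diagonal entries equal to 1 and all off-diagonal entries equal to β. Then (1/d)·T ∈ ℬ_d (i.e. T is a tail dependence matrix) if and only if 0 ≤ β ≤ 1. -/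
theorem stmt14 (d : ℕ) (hd : 2 ≤ d) (β : ℝ)
    (T : Matrix (Fin d) (Fin d) ℝ)
    (hT : ∀ i j, T i j = if i = j then 1 else β) :
    ((1 : ℝ) / d) • T ∈ BernoulliSet d ↔ (0 ≤ β ∧ β ≤ 1) := by
  have hdR : (0:ℝ) < (d:ℝ) := by
    have : 0 < d := by omega
    exact_mod_cast this
  constructor
  · intro hmem
    set i : Fin d := ⟨0, by omega⟩ with hi
    set j : Fin d := ⟨1, by omega⟩ with hj
    have hij : i ≠ j := by simp [hi, hj, Fin.ext_iff]
    have hC : BernoulliSet d ⊆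
        {M : Matrix (Fin d) (Fin d) ℝ | 0 ≤ M i j ∧ M i j ≤ M i i} := by
      apply convexHull_min
      · rintro M ⟨v, hv, rfl⟩
        constructor
        · rcases hv i with h | h <;> rcases hv j with h' | h' <;>
            simp [Matrix.of_apply, h, h']
        · rcases hv i with h | h <;> rcases hv j with h' | h' <;>
            simp [Matrix.of_apply, h, h']
      · intro x hx y hy a b ha hb hab
        have hx1 := hx.1; have hx2 := hx.2
        have hy1 := hy.1; have hy2 := hy.2
        constructor
        · show 0 ≤ (a • x + b • y) i j
          simp only [Matrix.add_apply, Matrix.smul_apply, smul_eq_mul]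
          nlinarith
        · show (a • x + b • y) i j ≤ (a • x + b • y) i i
          simp only [Matrix.add_apply, Matrix.smul_apply, smul_eq_mul]
          nlinarith
    have h := hC hmem
    have h1 : 0 ≤ 1/(d:ℝ) * β := by
      have := h.1
      simpa [Matrix.smul_apply, smul_eq_mul, hT, hij] using this
    have h2 : 1/(d:ℝ) * β ≤ 1/(d:ℝ) * 1 := by
      have := h.2
      simpa [Matrix.smul_apply, smul_eq_mul, hT, hij] using this
    have hβeq : β = (d:ℝ) * (1/(d:ℝ) * β) := by field_simp
    constructor
    · rw [hβeq]; exact mul_nonneg hdR.le h1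
    · have h1d : 0 < 1/(d:ℝ) := by positivity
      exact le_of_mul_le_mul_left h2 h1d
  · rintro ⟨hβ0, hβ1⟩
    classical
    set vfun : (Fin d ⊕ Bool) → (Fin d → ℝ) := fun k =>
      match k with
      | Sum.inl a => fun i => if i = a then 1 else 0
      | Sum.inr true => fun _ => 1
      | Sum.inr false => fun _ => 0 with hvfun
    set w : (Fin d ⊕ Bool) → ℝ := fun k =>
      match k with
      | Sum.inl _ => (1 - β)/d
      | Sum.inr true => β/d
      | Sum.inr false => β*((d:ℝ)-1)/d with hw
    set z : (Fin d ⊕ Bool) → Matrix (Fin d) (Fin d) ℝ := fun k =>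
      Matrix.of (fun i j => vfun k i * vfun k j) with hz
    have hzmem : ∀ k ∈ (Finset.univ : Finset (Fin d ⊕ Bool)),
        z k ∈ BernoulliSet d := by
      intro k _
      apply subset_convexHull
      refine ⟨vfun k, ?_, rfl⟩
      intro i
      rcases k with a | b
      · by_cases h : i = a <;> simp [hvfun, h]
      · rcases b <;> simp [hvfun]
    have hwnn : ∀ k ∈ (Finset.univ : Finset (Fin d ⊕ Bool)), 0 ≤ w k := by
      intro k _
      rcases k with a | b
      · simp only [hw]
        have : 0 ≤ 1 - β := by linarith
        positivity
      · rcases b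
        · simp only [hw]
          have h1 : (0:ℝ) ≤ (d:ℝ) - 1 := by
            have : (2:ℝ) ≤ (d:ℝ) := by exact_mod_cast hd
            linarith
          positivity
        · simp only [hw]; positivity
    have hwsum : ∑ k, w k = 1 := by
      rw [Fintype.sum_sum_type]
      simp only [hw, Finset.sum_const, Finset.card_univ, Fintype.card_fin,
        nsmul_eq_mul]
      have sumBool : ∑ b : Bool, (match (Sum.inr b : Fin d ⊕ Bool) with
          | Sum.inl _ => (1 - β)/d
          | Sum.inr true => β/d
          | Sum.inr false => β*((d:ℝ)-1)/d) = β/d + β*((d:ℝ)-1)/d := by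
        simp [Fintype.sum_bool]
      rw [sumBool]
      field_simp
      ring
    have key : ((1:ℝ)/d) • T = ∑ k, w k • z k := by
      ext i j
      rw [Matrix.sum_apply]
      rw [Fintype.sum_sum_type]
      simp only [hw, hz, hvfun, Matrix.smul_apply, Matrix.of_apply,
        smul_eq_mul, Fintype.sum_bool]
      rw [hT]
      have hsumd : ∑ a : Fin d, (1 - β)/(d:ℝ) *
          ((if i = a then (1:ℝ) else 0) * (if j = a then 1 else 0)) =
          (1 - β)/(d:ℝ) * (if i = j then 1 else 0) := by
        rw [← Finset.mul_sum]
        congr 1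
        have hpt : ∀ a : Fin d, (if i = a then (1:ℝ) else 0) *
            (if j = a then 1 else 0) =
            if a = i then (if i = j then (1:ℝ) else 0) else 0 := by
          intro a
          by_cases h1 : i = a
          · subst h1
            by_cases h2 : j = i <;> simp [h2, Ne.symm]
          · simp [h1, Ne.symm h1]
        simp only [hpt, Finset.sum_ite_eq', Finset.mem_univ, if_true]
      rw [hsumd]
      by_cases h : i = j <;> simp [h] <;> field_simp <;> ring
    rw [key]
    exact (convex_convexHull ℝ _).sum_mem hwnn hwsum hzmem
end

section
/- Let α, β ∈ ℝ and let T be the 3×3 symmetric matrix with rows (1, α, β), (α, 1, α), (β, α, 1). Then (1/3)·T ∈ ℬ_3 (i.e. T is a tail dependence matrix) if and only if α ≥ 0, 0 ≤ β ≤ 1, and 2α − β ≤ 1. -/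
private lemma combo7 {E : Type*} [AddCommGroup E] [Module ℝ E] {s : Set E}
    {x1 x2 x3 x4 x5 x6 x7 : E} (h1 : x1 ∈ s) (h2 : x2 ∈ s) (h3 : x3 ∈ s)
    (h4 : x4 ∈ s) (h5 : x5 ∈ s) (h6 : x6 ∈ s) (h7 : x7 ∈ s)
    {w1 w2 w3 w4 w5 w6 w7 : ℝ} (hw1 : 0 ≤ w1) (hw2 : 0 ≤ w2) (hw3 : 0 ≤ w3)
    (hw4 : 0 ≤ w4) (hw5 : 0 ≤ w5) (hw6 : 0 ≤ w6) (hw7 : 0 ≤ w7)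
    (hsum : w1 + w2 + w3 + w4 + w5 + w6 + w7 = 1) :
    w1 • x1 + w2 • x2 + w3 • x3 + w4 • x4 + w5 • x5 + w6 • x6 + w7 • x7
      ∈ convexHull ℝ s := by
  have key : ∑ i : Fin 7, (![w1,w2,w3,w4,w5,w6,w7] i) • (![x1,x2,x3,x4,x5,x6,x7] i)
      ∈ convexHull ℝ s := by
    refine (convex_convexHull ℝ s).sum_mem (fun i _ => ?_) ?_ (fun i _ => ?_)
    · fin_cases i <;> assumption
    · rw [Fin.sum_univ_seven]; simpa using hsum
    · exact subset_convexHull ℝ s (by fin_cases i <;> assumption)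
  rw [Fin.sum_univ_seven] at key
  simpa using key

private lemma genMem (v : Fin 3 → ℝ) (hv : ∀ i, v i = 0 ∨ v i = 1) :
    Matrix.of (fun i j => v i * v j) ∈
      {M : Matrix (Fin 3) (Fin 3) ℝ | ∃ v : Fin 3 → ℝ,
        (∀ i, v i = 0 ∨ v i = 1) ∧ M = Matrix.of (fun i j => v i * v j)} :=
  ⟨v, hv, rfl⟩

set_option maxHeartbeats 2000000 in
theorem stmt15 (α β : ℝ) (T : Matrix (Fin 3) (Fin 3) ℝ)
    (hT : T = !![1, α, β; α, 1, α; β, α, 1]) :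
    ((1 : ℝ) / 3) • T ∈ BernoulliSet 3 ↔
      (0 ≤ α ∧ 0 ≤ β ∧ β ≤ 1 ∧ 2 * α - β ≤ 1) := by
  constructor
  · intro h
    have hsub : BernoulliSet 3 ⊆ {M : Matrix (Fin 3) (Fin 3) ℝ |
        0 ≤ M 0 1 ∧ 0 ≤ M 0 2 ∧ 2 * M 0 2 ≤ M 0 0 + M 2 2 ∧
        M 0 1 + M 1 2 ≤ M 1 1 + M 0 2} := by
      apply convexHull_min
      · rintro M ⟨v, hv, rfl⟩
        rcases hv 0 with h0 | h0 <;> rcases hv 1 with h1 | h1 <;>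
          rcases hv 2 with h2 | h2 <;>
          simp [Matrix.of_apply, h0, h1, h2] <;> norm_num
      · intro x hx y hy a b ha hb hab
        simp only [Set.mem_setOf_eq, Matrix.add_apply, Matrix.smul_apply,
          smul_eq_mul] at *
        refine ⟨?_, ?_, ?_, ?_⟩ <;>
          nlinarith [hx.1, hx.2.1, hx.2.2.1, hx.2.2.2, hy.1, hy.2.1,
            hy.2.2.1, hy.2.2.2, mul_nonneg ha hx.1, mul_nonneg hb hy.1,
            mul_nonneg ha hx.2.1, mul_nonneg hb hy.2.1,
            mul_le_mul_of_nonneg_left hx.2.2.1 ha,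
            mul_le_mul_of_nonneg_left hy.2.2.1 hb,
            mul_le_mul_of_nonneg_left hx.2.2.2 ha,
            mul_le_mul_of_nonneg_left hy.2.2.2 hb]
    have := hsub h
    simp only [Set.mem_setOf_eq, Matrix.smul_apply, hT, smul_eq_mul] at this
    norm_num [Matrix.cons_val_zero, Matrix.cons_val_one, Matrix.head_cons, Matrix.cons_val_two, Matrix.tail_cons] at this
    refine ⟨by linarith [this.1], by linarith [this.2.1], by linarith [this.2.2.1],
      by linarith [this.2.2.2]⟩
  · rintro ⟨hα, hβ0, hβ1, hαβ⟩
    have hα1 : α ≤ 1 := by linarith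
    unfold BernoulliSet
    have m111 := genMem ![1,1,1] (by intro i; fin_cases i <;> norm_num)
    have m101 := genMem ![1,0,1] (by intro i; fin_cases i <;> norm_num)
    have m110 := genMem ![1,1,0] (by intro i; fin_cases i <;> norm_num)
    have m011 := genMem ![0,1,1] (by intro i; fin_cases i <;> norm_num)
    have m100 := genMem ![1,0,0] (by intro i; fin_cases i <;> norm_num)
    have m010 := genMem ![0,1,0] (by intro i; fin_cases i <;> norm_num)
    have m001 := genMem ![0,0,1] (by intro i; fin_cases i <;> norm_num)
    have m000 := genMem ![0,0,0] (by intro i; fin_cases i <;> norm_num)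
    rcases le_total α β with hc | hc
    · have heq : ((1:ℝ)/3) • T =
          (α/3) • Matrix.of (fun i j => (![1,1,1]:Fin 3 → ℝ) i * ![1,1,1] j) +
          ((β-α)/3) • Matrix.of (fun i j => (![1,0,1]:Fin 3 → ℝ) i * ![1,0,1] j) +
          ((1-β)/3) • Matrix.of (fun i j => (![1,0,0]:Fin 3 → ℝ) i * ![1,0,0] j) +
          ((1-α)/3) • Matrix.of (fun i j => (![0,1,0]:Fin 3 → ℝ) i * ![0,1,0] j) +
          ((1-β)/3) • Matrix.of (fun i j => (![0,0,1]:Fin 3 → ℝ) i * ![0,0,1] j) +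
          ((α+β)/3) • Matrix.of (fun i j => (![0,0,0]:Fin 3 → ℝ) i * ![0,0,0] j) +
          (0:ℝ) • Matrix.of (fun i j => (![0,0,0]:Fin 3 → ℝ) i * ![0,0,0] j) := by
        ext a b
        fin_cases a <;> fin_cases b <;>
          simp [hT, Matrix.add_apply, Matrix.smul_apply, Matrix.vecHead, Matrix.vecTail, Pi.smul_apply, smul_eq_mul, mul_zero, Function.comp] <;> ring
      rw [heq]
      exact combo7 m111 m101 m100 m010 m001 m000 m000
        (by linarith) (by linarith) (by linarith) (by linarith) (by linarith)
        (by linarith) le_rfl (by ring)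
    · have heq : ((1:ℝ)/3) • T =
          (β/3) • Matrix.of (fun i j => (![1,1,1]:Fin 3 → ℝ) i * ![1,1,1] j) +
          ((α-β)/3) • Matrix.of (fun i j => (![1,1,0]:Fin 3 → ℝ) i * ![1,1,0] j) +
          ((α-β)/3) • Matrix.of (fun i j => (![0,1,1]:Fin 3 → ℝ) i * ![0,1,1] j) +
          ((1-α)/3) • Matrix.of (fun i j => (![1,0,0]:Fin 3 → ℝ) i * ![1,0,0] j) +
          ((1-2*α+β)/3) • Matrix.of (fun i j => (![0,1,0]:Fin 3 → ℝ) i * ![0,1,0] j) +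
          ((1-α)/3) • Matrix.of (fun i j => (![0,0,1]:Fin 3 → ℝ) i * ![0,0,1] j) +
          (2*α/3) • Matrix.of (fun i j => (![0,0,0]:Fin 3 → ℝ) i * ![0,0,0] j) := by
        ext a b
        fin_cases a <;> fin_cases b <;>
          simp [hT, Matrix.add_apply, Matrix.smul_apply, Matrix.vecHead, Matrix.vecTail, Pi.smul_apply, smul_eq_mul, mul_zero, Function.comp] <;> ring
      rw [heq]
      exact combo7 m111 m110 m011 m100 m010 m001 m000
        (by linarith) (by linarith) (by linarith) (by linarith) (by linarith)
        (by linarith) (by linarith) (by ring)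
end

section
/- Let α, β ∈ ℝ and let T be the 4×4 symmetric Toeplitz matrix with T_{ii} = 1, T_{ij} = α when |i − j| = 1, T_{ij} = β when |i − j| = 2, and T_{ij} = 0 when |i − j| = 3. Then (1/4)·T ∈ ℬ_4 (i.e. T is a tail dependence matrix) if and only if α ≥ 0, β ≥ 0, α + β ≤ 1, and 2α − β ≤ 1. -/
set_option maxHeartbeats 1000000


/-- Auxiliary 0-1 vectors used in the convex-combination construction. -/
def stmt16vv (k : Fin 12) (i : Fin 4) : ℝ :=
  if 4 * k.val + i.val ∈ ([4, 9, 14, 19, 20, 21, 25, 26, 30, 31,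
      32, 34, 37, 39, 40, 41, 42, 45, 46, 47] : List ℕ)
    then 1 else 0

lemma stmt16vv01 (k : Fin 12) (i : Fin 4) : stmt16vv k i = 0 ∨ stmt16vv k i = 1 := by
  unfold stmt16vv
  split <;> simp

/-- Weights for the convex combination. -/
noncomputable def stmt16wt (α β s : ℝ) (k : Fin 12) : ℝ :=
  if k.val = 0 then 3*α/4 + β/2 - 2*s
  else if k.val = 1 then 1/4 - α/4 - β/4 + s
  else if k.val = 2 then 1/4 - α/2 - β/4 + 2*s
  else if k.val = 3 then 1/4 - α/2 - β/4 + 2*s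
  else if k.val = 4 then 1/4 - α/4 - β/4 + s
  else if k.val = 5 then α/4 - s
  else if k.val = 6 then α/4 - 2*s
  else if k.val = 7 then α/4 - s
  else if k.val = 8 then β/4 - s
  else if k.val = 9 then β/4 - s
  else s

theorem stmt16 (α β : ℝ) (T : Matrix (Fin 4) (Fin 4) ℝ)
    (hT : ∀ i j, T i j =
      if Nat.dist i.val j.val = 0 then 1
      else if Nat.dist i.val j.val = 1 then α
      else if Nat.dist i.val j.val = 2 then β
      else 0) :
    ((1 : ℝ) / 4) • T ∈ BernoulliSet 4 ↔
      (0 ≤ α ∧ 0 ≤ β ∧ α + β ≤ 1 ∧ 2 * α - β ≤ 1) := by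
  have hT01 : T 0 1 = α := by rw [hT]; norm_num [Nat.dist, show ((3:Fin 4):ℕ) = 3 from rfl, show ((2:Fin 4):ℕ) = 2 from rfl]
  have hT02 : T 0 2 = β := by rw [hT]; norm_num [Nat.dist, show ((3:Fin 4):ℕ) = 3 from rfl, show ((2:Fin 4):ℕ) = 2 from rfl]
  have hT03 : T 0 3 = (0:ℝ) := by rw [hT]; norm_num [Nat.dist, show ((3:Fin 4):ℕ) = 3 from rfl, show ((2:Fin 4):ℕ) = 2 from rfl]
  have hT12 : T 1 2 = α := by rw [hT]; norm_num [Nat.dist, show ((3:Fin 4):ℕ) = 3 from rfl, show ((2:Fin 4):ℕ) = 2 from rfl]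
  have hT13 : T 1 3 = β := by rw [hT]; norm_num [Nat.dist, show ((3:Fin 4):ℕ) = 3 from rfl, show ((2:Fin 4):ℕ) = 2 from rfl]
  have hT11 : T 1 1 = (1:ℝ) := by rw [hT]; norm_num [Nat.dist, show ((3:Fin 4):ℕ) = 3 from rfl, show ((2:Fin 4):ℕ) = 2 from rfl]
  constructor
  · intro hmem
    have key : ∀ (f : Matrix (Fin 4) (Fin 4) ℝ → ℝ), IsLinearMap ℝ f →
        (∀ v : Fin 4 → ℝ, (∀ i, v i = 0 ∨ v i = 1) →
          f (Matrix.of (fun i j => v i * v j)) ≤ 0) →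
        f (((1:ℝ)/4) • T) ≤ 0 := by
      intro f hf hgen
      have hC : Convex ℝ {M : Matrix (Fin 4) (Fin 4) ℝ | f M ≤ 0} :=
        convex_halfSpace_le hf 0
      have hsub : {M : Matrix (Fin 4) (Fin 4) ℝ | ∃ v : Fin 4 → ℝ,
          (∀ i, v i = 0 ∨ v i = 1) ∧ M = Matrix.of (fun i j => v i * v j)} ⊆
          {M | f M ≤ 0} := by
        rintro M ⟨v, hv, rfl⟩
        exact hgen v hv
      exact convexHull_min hsub hC hmem
    have h1 : 0 ≤ α := by
      have := key (fun M => -(M 0 1)) ⟨fun M N => by simp [Matrix.add_apply]; try ring,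
        fun c M => by simp [Matrix.smul_apply, smul_eq_mul]; try ring⟩ ?_
      · simp only [Matrix.smul_apply, smul_eq_mul, hT01] at this; linarith
      · intro v hv
        rcases hv 0 with h0 | h0 <;> rcases hv 1 with h1 | h1 <;>
          simp [Matrix.of_apply, h0, h1]
    have h2 : 0 ≤ β := by
      have := key (fun M => -(M 0 2)) ⟨fun M N => by simp [Matrix.add_apply]; try ring,
        fun c M => by simp [Matrix.smul_apply, smul_eq_mul]; try ring⟩ ?_
      · simp only [Matrix.smul_apply, smul_eq_mul, hT02] at this; linarith
      · intro v hv
        rcases hv 0 with h0 | h0 <;> rcases hv 2 with h1 | h1 <;>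
          simp [Matrix.of_apply, h0, h1]
    have h3 : α + β ≤ 1 := by
      have := key (fun M => M 0 1 + M 1 3 - M 1 1 - M 0 3)
        ⟨fun M N => by simp [Matrix.add_apply]; try ring,
         fun c M => by simp [Matrix.smul_apply, smul_eq_mul]; try ring⟩ ?_
      · simp only [Matrix.smul_apply, smul_eq_mul, hT01, hT13, hT11, hT03] at this; linarith
      · intro v hv
        rcases hv 0 with h0 | h0 <;> rcases hv 1 with h1 | h1 <;> rcases hv 3 with h4 | h4 <;>
          simp [Matrix.of_apply, h0, h1, h4]
    have h4 : 2 * α - β ≤ 1 := by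
      have := key (fun M => M 0 1 + M 1 2 - M 0 2 - M 1 1)
        ⟨fun M N => by simp [Matrix.add_apply]; try ring,
         fun c M => by simp [Matrix.smul_apply, smul_eq_mul]; try ring⟩ ?_
      · simp only [Matrix.smul_apply, smul_eq_mul, hT01, hT12, hT02, hT11] at this; linarith
      · intro v hv
        rcases hv 0 with h0 | h0 <;> rcases hv 1 with h1 | h1 <;> rcases hv 2 with h4 | h4 <;>
          simp [Matrix.of_apply, h0, h1, h4]
    exact ⟨h1, h2, h3, h4⟩
  · rintro ⟨hα, hβ, hab, h2ab⟩
    set s : ℝ := min (β/4) (α/8) with hs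
    have hs0 : 0 ≤ s := le_min (by linarith) (by linarith)
    have hsb : s ≤ β/4 := min_le_left _ _
    have hsa : s ≤ α/8 := min_le_right _ _
    have hB : 0 ≤ 1/4 - α/2 - β/4 + 2*s := by
      rcases min_cases (β/4) (α/8) with ⟨h, h'⟩ | ⟨h, h'⟩ <;> rw [hs, h] <;> linarith
    have hsum : ∑ k : Fin 12, stmt16wt α β s k = 1 := by
      norm_num [Fin.sum_univ_succ, stmt16wt]; ring
    have hwpos : ∀ k ∈ (Finset.univ : Finset (Fin 12)), 0 ≤ stmt16wt α β s k := by
      intro k _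
      unfold stmt16wt
      split
      · linarith
      all_goals split
      any_goals linarith
      all_goals split
      any_goals linarith
      all_goals split
      any_goals linarith
      all_goals split
      any_goals linarith
      all_goals split
      any_goals linarith
      all_goals split
      any_goals linarith
      all_goals split
      any_goals linarith
      all_goals split
      any_goals linarith
      all_goals split
      any_goals linarith
    have hcm : Finset.univ.centerMass (stmt16wt α β s)
        (fun k => Matrix.of (fun i j => stmt16vv k i * stmt16vv k j)) ∈ BernoulliSet 4 := by
      apply Finset.centerMass_mem_convexHull
      · exact hwpos
      · rw [hsum]; norm_num
      · intro k _
        exact ⟨stmt16vv k, stmt16vv01 k, rfl⟩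
    have heq : Finset.univ.centerMass (stmt16wt α β s)
        (fun k => Matrix.of (fun i j => stmt16vv k i * stmt16vv k j)) = ((1:ℝ)/4) • T := by
      rw [Finset.centerMass_eq_of_sum_1 _ _ hsum]
      ext i j
      rw [Matrix.sum_apply, Matrix.smul_apply, hT i j]
      fin_cases i <;> fin_cases j <;>
        · simp only [Fin.sum_univ_succ, Finset.univ_eq_empty, Finset.sum_empty,
            Matrix.smul_apply, Matrix.of_apply, smul_eq_mul]
          norm_num [stmt16vv, stmt16wt, Nat.dist]
          try ring
    rw [← heq]; exact hcm
end

section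
/- Let α, β ∈ ℝ and let T be the 5×5 symmetric Toeplitz matrix with T_{ii} = 1, T_{ij} = α when |i − j| = 1, T_{ij} = β when |i − j| = 2, and T_{ij} = 0 when |i − j| ≥ 3. Then (1/5)·T ∈ ℬ_5 (i.e. T is a tail dependence matrix) if and only if α ≥ 0, 0 ≤ β ≤ 1/2, α + β ≤ 1, and 2α − β ≤ 1. -/
lemma tdm_aux_key (x y z : ℝ) (hx : x = 0 ∨ x = 1) (hy : y = 0 ∨ y = 1)
    (hz : z = 0 ∨ z = 1) : y * x + y * z - y * y - x * z ≤ 0 := by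
  rcases hx with h|h <;> rcases hy with h'|h' <;> rcases hz with h''|h'' <;>
    subst h <;> subst h' <;> subst h'' <;> norm_num

set_option maxHeartbeats 2000000 in
lemma tdm_decomp (α β : ℝ) (T : Matrix (Fin 5) (Fin 5) ℝ)
    (hT : ∀ i j, T i j =
      if Nat.dist i.val j.val = 0 then 1
      else if Nat.dist i.val j.val = 1 then α
      else if Nat.dist i.val j.val = 2 then β
      else 0)
    (e s0 s1 s2 a b p q t u : ℝ)
    (he : 0 ≤ e) (hs0 : 0 ≤ s0) (hs1 : 0 ≤ s1) (hs2 : 0 ≤ s2)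
    (ha : 0 ≤ a) (hb : 0 ≤ b) (hp : 0 ≤ p) (hq : 0 ≤ q)
    (ht : 0 ≤ t) (hu : 0 ≤ u)
    (h1 : s0 + a + p + t = 1/5)
    (h2 : s1 + a + b + q + t + u = 1/5)
    (h3 : s2 + 2*b + 2*p + 2*t + u = 1/5)
    (h4 : a + t = α/5)
    (h5 : b + t + u = α/5)
    (h6 : p + t = β/5)
    (h7 : q + u = β/5)
    (hsum : e + 2*s0 + 2*s1 + s2 + 2*a + 2*b + 2*p + q + 2*t + u = 1) :
    ((1 : ℝ) / 5) • T ∈ BernoulliSet 5 := by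
  classical
  set V : Fin 16 → (Fin 5 → ℝ) :=
    ![![0,0,0,0,0], ![1,0,0,0,0], ![0,1,0,0,0], ![0,0,1,0,0], ![0,0,0,1,0], ![0,0,0,0,1],
      ![1,1,0,0,0], ![0,1,1,0,0], ![0,0,1,1,0], ![0,0,0,1,1],
      ![1,0,1,0,0], ![0,1,0,1,0], ![0,0,1,0,1],
      ![1,1,1,0,0], ![0,1,1,1,0], ![0,0,1,1,1]] with hV
  set w : Fin 16 → ℝ := ![e, s0, s1, s2, s1, s0, a, b, b, a, p, q, p, t, u, t] with hw
  set M : Fin 16 → Matrix (Fin 5) (Fin 5) ℝ :=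
    fun k => Matrix.of (fun i j => V k i * V k j) with hM
  have key : ((1 : ℝ) / 5) • T = ∑ k : Fin 16, w k • M k := by
    ext i j
    rw [Matrix.smul_apply, hT i j]
    fin_cases i <;> fin_cases j <;>
      · simp only [hw, hM, hV, Matrix.sum_apply, Matrix.smul_apply, Matrix.of_apply,
          Fin.sum_univ_succ, Fin.sum_univ_zero, Matrix.cons_val_zero, Matrix.cons_val_one,
          Matrix.head_cons, Matrix.cons_val_succ, smul_eq_mul, Fin.isValue,
          show ((0:Fin 5):ℕ) = 0 from rfl, show ((1:Fin 5):ℕ) = 1 from rfl,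
          show ((2:Fin 5):ℕ) = 2 from rfl, show ((3:Fin 5):ℕ) = 3 from rfl,
          show ((4:Fin 5):ℕ) = 4 from rfl, Nat.dist]
        norm_num
        try linarith
  rw [key]
  exact (convex_convexHull ℝ _).sum_mem
    (fun k _ => by
      fin_cases k <;>
        simp only [hw, Matrix.cons_val_zero, Matrix.cons_val_one, Matrix.head_cons,
          Matrix.cons_val_succ] <;> assumption)
    (by
      simp only [hw, Fin.sum_univ_succ, Fin.sum_univ_zero, Matrix.cons_val_zero,
        Matrix.cons_val_one, Matrix.head_cons, Matrix.cons_val_succ]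
      linarith)
    (fun k _ => subset_convexHull ℝ _ ⟨V k, by
      fin_cases k <;> intro i <;> fin_cases i <;> norm_num [hV], rfl⟩)

theorem stmt17 (α β : ℝ) (T : Matrix (Fin 5) (Fin 5) ℝ)
    (hT : ∀ i j, T i j =
      if Nat.dist i.val j.val = 0 then 1
      else if Nat.dist i.val j.val = 1 then α
      else if Nat.dist i.val j.val = 2 then β
      else 0) :
    ((1 : ℝ) / 5) • T ∈ BernoulliSet 5 ↔
      (0 ≤ α ∧ 0 ≤ β ∧ β ≤ 1 / 2 ∧ α + β ≤ 1 ∧ 2 * α - β ≤ 1) := by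
  have fv : ((0:Fin 5):ℕ) = 0 ∧ ((1:Fin 5):ℕ) = 1 ∧ ((2:Fin 5):ℕ) = 2 ∧
      ((3:Fin 5):ℕ) = 3 ∧ ((4:Fin 5):ℕ) = 4 := ⟨rfl, rfl, rfl, rfl, rfl⟩
  obtain ⟨f0, f1, f2, f3, f4⟩ := fv
  constructor
  · intro hmem
    have hfun : ∀ (L : Matrix (Fin 5) (Fin 5) ℝ → ℝ), IsLinearMap ℝ L →
        (∀ x ∈ {M : Matrix (Fin 5) (Fin 5) ℝ | ∃ v : Fin 5 → ℝ,
          (∀ i, v i = 0 ∨ v i = 1) ∧ M = Matrix.of (fun i j => v i * v j)}, L x ≤ 0) →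
        L (((1 : ℝ) / 5) • T) ≤ 0 := by
      intro L hL hbound
      exact convexHull_min hbound (convex_halfSpace_le hL (0:ℝ)) hmem
    have e01 : T 0 1 = α := by rw [hT]; norm_num [Nat.dist, f0, f1]
    have e02 : T 0 2 = β := by rw [hT]; norm_num [Nat.dist, f0, f2]
    have e10 : T 1 0 = α := by rw [hT]; norm_num [Nat.dist, f0, f1]
    have e12 : T 1 2 = α := by rw [hT]; norm_num [Nat.dist, f1, f2]
    have e13 : T 1 3 = β := by rw [hT]; norm_num [Nat.dist, f1, f3]
    have e11 : T 1 1 = 1 := by rw [hT]; norm_num [Nat.dist, f1]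
    have e22 : T 2 2 = 1 := by rw [hT]; norm_num [Nat.dist, f2]
    have e20 : T 2 0 = β := by rw [hT]; norm_num [Nat.dist, f0, f2]
    have e24 : T 2 4 = β := by rw [hT]; norm_num [Nat.dist, f2, f4]
    have e03 : T 0 3 = 0 := by rw [hT]; norm_num [Nat.dist, f0, f3]
    have e04 : T 0 4 = 0 := by rw [hT]; norm_num [Nat.dist, f0, f4]
    have hα : 0 ≤ α := by
      have := hfun (fun M => -(M 0 1))
        ⟨fun x y => by simp [Matrix.add_apply]; try ring,
         fun c x => by simp [Matrix.smul_apply]; try ring⟩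
        (by
          rintro M ⟨v, hv, rfl⟩
          simp only [Matrix.of_apply]
          rcases hv 0 with h|h <;> rcases hv 1 with h'|h' <;> rw [h, h'] <;> try norm_num)
      simp only [Matrix.smul_apply, smul_eq_mul, e01] at this
      linarith
    have hβ : 0 ≤ β := by
      have := hfun (fun M => -(M 0 2))
        ⟨fun x y => by simp [Matrix.add_apply]; try ring,
         fun c x => by simp [Matrix.smul_apply]; try ring⟩
        (by
          rintro M ⟨v, hv, rfl⟩
          simp only [Matrix.of_apply]
          rcases hv 0 with h|h <;> rcases hv 2 with h'|h' <;> rw [h, h'] <;> try norm_num)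
      simp only [Matrix.smul_apply, smul_eq_mul, e02] at this
      linarith
    have hβ2 : β ≤ 1 / 2 := by
      have := hfun (fun M => M 2 0 + M 2 4 - M 2 2 - M 0 4)
        ⟨fun x y => by simp [Matrix.add_apply]; try ring,
         fun c x => by simp [Matrix.smul_apply]; try ring⟩
        (by
          rintro M ⟨v, hv, rfl⟩
          simp only [Matrix.of_apply]
          exact tdm_aux_key (v 0) (v 2) (v 4) (hv 0) (hv 2) (hv 4))
      simp only [Matrix.smul_apply, smul_eq_mul, e20, e24, e22, e04] at this
      linarith
    have hαβ : α + β ≤ 1 := by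
      have := hfun (fun M => M 1 0 + M 1 3 - M 1 1 - M 0 3)
        ⟨fun x y => by simp [Matrix.add_apply]; try ring,
         fun c x => by simp [Matrix.smul_apply]; try ring⟩
        (by
          rintro M ⟨v, hv, rfl⟩
          simp only [Matrix.of_apply]
          exact tdm_aux_key (v 0) (v 1) (v 3) (hv 0) (hv 1) (hv 3))
      simp only [Matrix.smul_apply, smul_eq_mul, e10, e13, e11, e03] at this
      linarith
    have hαβ2 : 2 * α - β ≤ 1 := by
      have := hfun (fun M => M 1 0 + M 1 2 - M 1 1 - M 0 2)
        ⟨fun x y => by simp [Matrix.add_apply]; try ring,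
         fun c x => by simp [Matrix.smul_apply]; try ring⟩
        (by
          rintro M ⟨v, hv, rfl⟩
          simp only [Matrix.of_apply]
          exact tdm_aux_key (v 0) (v 1) (v 2) (hv 0) (hv 1) (hv 2))
      simp only [Matrix.smul_apply, smul_eq_mul, e10, e12, e11, e02] at this
      linarith
    exact ⟨hα, hβ, hβ2, hαβ, hαβ2⟩
  · rintro ⟨hα, hβ, hβ2, hαβ, hαβ2⟩
    rcases le_total (2*β) α with hc1 | hc1
    · exact tdm_decomp α β T hT (4*α/5) ((1-α)/5) ((1-2*α+β)/5) ((1-2*α+β)/5)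
        ((α-β)/5) ((α-2*β)/5) 0 0 (β/5) (β/5)
        (by linarith) (by linarith) (by linarith) (by linarith) (by linarith)
        (by linarith) (by linarith) (by linarith) (by linarith) (by linarith)
        (by ring) (by ring) (by ring) (by ring) (by ring) (by ring) (by ring) (by ring)
    · rcases le_total β α with hc2 | hc2
      · exact tdm_decomp α β T hT ((3*α+2*β)/5) ((1-α)/5) ((1-α-β)/5) ((1-α-β)/5)
          ((α-β)/5) 0 0 ((2*β-α)/5) (β/5) ((α-β)/5)
          (by linarith) (by linarith) (by linarith) (by linarith) (by linarith)
          (by linarith) (by linarith) (by linarith) (by linarith) (by linarith)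
          (by ring) (by ring) (by ring) (by ring) (by ring) (by ring) (by ring) (by ring)
      · exact tdm_decomp α β T hT ((2*α+3*β)/5) ((1-β)/5) ((1-α-β)/5) ((1-2*β)/5)
          0 0 ((β-α)/5) (β/5) (α/5) 0
          (by linarith) (by linarith) (by linarith) (by linarith) (by linarith)
          (by linarith) (by linarith) (by linarith) (by linarith) (by linarith)
          (by ring) (by ring) (by ring) (by ring) (by ring) (by ring) (by ring) (by ring)
end

section
/- Let d ≥ 3 and α ∈ ℝ, and let T be the d×d symmetric Toeplitz matrix with T_{ii} = 1, T_{ij} = α when |i − j| = 1, and T_{ij} = 0 when |i − j| ≥ 2. Then (1/d)·T ∈ ℬ_d (i.e. T is a tail dependence matrix) if and only if 0 ≤ α ≤ 1/2. -/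
section Aux

lemma sumA (d a : ℕ) (ha : a < d) :
    ∑ k ∈ Finset.range (d-1),
      ((if a = k ∨ a = k+1 then (1:ℝ) else 0) * (if a = k ∨ a = k+1 then 1 else 0))
    = (if 0 < a then 1 else 0) + (if a < d - 1 then 1 else 0) := by
  have h : ∀ k, ((if a = k ∨ a = k+1 then (1:ℝ) else 0) * (if a = k ∨ a = k+1 then 1 else 0))
      = (if k = a then 1 else 0) + (if 0 < a ∧ k = a - 1 then 1 else 0) := by
    intro k
    split_ifs <;> norm_num <;> omega
  simp only [h]
  rw [Finset.sum_add_distrib, Finset.sum_ite_eq' (Finset.range (d-1)) a (fun _ => (1:ℝ))]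
  by_cases h0 : 0 < a
  · have h1 : ∀ k, (if 0 < a ∧ k = a - 1 then (1:ℝ) else 0) = (if k = a - 1 then 1 else 0) := by
      intro k; simp [h0]
    simp only [h1]
    rw [Finset.sum_ite_eq' (Finset.range (d-1)) (a-1) (fun _ => (1:ℝ))]
    have : a - 1 ∈ Finset.range (d-1) := by simp only [Finset.mem_range]; omega
    simp only [this, if_pos, Finset.mem_range, h0]
    split_ifs <;> norm_num <;> omega
  · simp only [h0, false_and, if_false, Finset.sum_const_zero, Finset.mem_range]
    split_ifs <;> norm_num <;> omega

lemma sumB (d a b : ℕ) (hb : b < d) (hab : b = a + 1) :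
    ∑ k ∈ Finset.range (d-1),
      ((if a = k ∨ a = k+1 then (1:ℝ) else 0) * (if b = k ∨ b = k+1 then 1 else 0)) = 1 := by
  have h : ∀ k, ((if a = k ∨ a = k+1 then (1:ℝ) else 0) * (if b = k ∨ b = k+1 then 1 else 0))
      = (if k = a then 1 else 0) := by
    intro k; split_ifs <;> norm_num <;> omega
  simp only [h]
  rw [Finset.sum_ite_eq' (Finset.range (d-1)) a (fun _ => (1:ℝ))]
  have : a ∈ Finset.range (d-1) := by simp only [Finset.mem_range]; omega
  simp [this]

lemma sumC (d a b : ℕ) (h1 : a ≠ b) (h2 : a ≠ b+1) (h3 : b ≠ a+1) :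
    ∑ k ∈ Finset.range (d-1),
      ((if a = k ∨ a = k+1 then (1:ℝ) else 0) * (if b = k ∨ b = k+1 then 1 else 0)) = 0 := by
  apply Finset.sum_eq_zero
  intro k _
  split_ifs <;> norm_num <;> omega

lemma sumS (d a b : ℕ) (c : ℕ → ℝ) (ha : a < d) :
    ∑ m ∈ Finset.range d, c m * ((if a = m then (1:ℝ) else 0) * (if b = m then 1 else 0))
    = if b = a then c a else 0 := by
  by_cases hab : b = a
  · subst hab
    have h : ∀ m, c m * ((if b = m then (1:ℝ) else 0) * (if b = m then 1 else 0))
        = if m = b then c m else 0 := by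
      intro m; split_ifs <;> norm_num <;> omega
    simp only [h]
    rw [Finset.sum_ite_eq' (Finset.range d) b c]
    simp [Finset.mem_range, ha]
  · rw [if_neg hab]
    apply Finset.sum_eq_zero
    intro m _
    split_ifs <;> norm_num <;> omega

lemma nat_dist_def (a b : ℕ) : Nat.dist a b = a - b + (b - a) := rfl

/-- pair vector `e_k + e_{k+1}` as a 0-1 vector -/
def pairVec (d k : ℕ) : Fin d → ℝ := fun i => if (i:ℕ) = k ∨ (i:ℕ) = k + 1 then 1 else 0

/-- singleton vector `e_m` -/
def singVec (d m : ℕ) : Fin d → ℝ := fun i => if (i:ℕ) = m then 1 else 0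

def bvec (d : ℕ) : Option (Fin (d-1) ⊕ Fin d) → Fin d → ℝ
  | none => fun _ => 0
  | some (Sum.inl k) => pairVec d k.val
  | some (Sum.inr m) => singVec d m.val

noncomputable def bw (d : ℕ) (α : ℝ) : Option (Fin (d-1) ⊕ Fin d) → ℝ
  | none => α * ((d:ℝ) - 1) / d
  | some (Sum.inl _) => α / d
  | some (Sum.inr m) =>
      (1 - 2*α)/d + (if m.val = 0 then α/d else 0) + (if m.val = d-1 then α/d else 0)

lemma bw_sum (d : ℕ) (hd : 3 ≤ d) (α : ℝ) :
    ∑ o : Option (Fin (d-1) ⊕ Fin d), bw d α o = 1 := by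
  have hD : (3:ℝ) ≤ (d:ℝ) := by exact_mod_cast hd
  have hD0 : (d:ℝ) ≠ 0 := by positivity
  rw [Fintype.sum_option, Fintype.sum_sum_type]
  have h1 : ∑ k : Fin (d-1), bw d α (some (Sum.inl k)) = ((d:ℝ)-1) * (α/d) := by
    simp only [bw]
    rw [Finset.sum_const, Finset.card_univ, Fintype.card_fin, nsmul_eq_mul]
    congr 1
    push_cast [Nat.cast_sub (by omega : 1 ≤ d)]
    ring
  have h2 : ∑ m : Fin d, bw d α (some (Sum.inr m)) = (d:ℝ) * ((1-2*α)/d) + α/d + α/d := by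
    simp only [bw]
    rw [Finset.sum_add_distrib, Finset.sum_add_distrib, Finset.sum_const, Finset.card_univ,
      Fintype.card_fin, nsmul_eq_mul]
    congr 1
    · congr 1
      rw [Fin.sum_univ_eq_sum_range (fun m => if m = 0 then α/d else 0) d,
        Finset.sum_ite_eq' (Finset.range d) 0 (fun _ => α/d)]
      simp only [Finset.mem_range]
      rw [if_pos (by omega)]
    · rw [Fin.sum_univ_eq_sum_range (fun m => if m = d-1 then α/d else 0) d,
        Finset.sum_ite_eq' (Finset.range d) (d-1) (fun _ => α/d)]
      simp only [Finset.mem_range]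
      rw [if_pos (by omega)]
  rw [h1, h2]
  show α * ((d:ℝ) - 1) / d + _ = 1
  field_simp
  ring

end Aux

theorem stmt18 (d : ℕ) (hd : 3 ≤ d) (α : ℝ)
    (T : Matrix (Fin d) (Fin d) ℝ)
    (hT : ∀ i j, T i j =
      if Nat.dist i.val j.val = 0 then 1
      else if Nat.dist i.val j.val = 1 then α
      else 0) :
    ((1 : ℝ) / d) • T ∈ BernoulliSet d ↔ (0 ≤ α ∧ α ≤ 1 / 2) := by
  have hD : (3:ℝ) ≤ (d:ℝ) := by exact_mod_cast hd
  have hD0 : (0:ℝ) < (d:ℝ) := by linarith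
  constructor
  · -- forward direction
    intro hmem
    have i0 : Fin d := ⟨0, by omega⟩
    set j0 : Fin d := ⟨0, by omega⟩ with hj0
    set j1 : Fin d := ⟨1, by omega⟩ with hj1
    set j2 : Fin d := ⟨2, by omega⟩ with hj2
    set t : Set (Matrix (Fin d) (Fin d) ℝ) :=
      {M | 0 ≤ M j0 j1 ∧ M j1 j0 + M j1 j2 ≤ M j1 j1 + 2 * M j0 j2} with ht
    have hconv : Convex ℝ t := by
      intro x hx y hy a b ha hb hab
      obtain ⟨hx1, hx2⟩ := hx
      obtain ⟨hy1, hy2⟩ := hy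
      constructor <;>
        simp only [Matrix.add_apply, Matrix.smul_apply, smul_eq_mul] <;> nlinarith
    have hsub : {M : Matrix (Fin d) (Fin d) ℝ | ∃ v : Fin d → ℝ,
        (∀ i, v i = 0 ∨ v i = 1) ∧ M = Matrix.of (fun i j => v i * v j)} ⊆ t := by
      rintro M ⟨v, hv, rfl⟩
      rcases hv j0 with h0 | h0 <;> rcases hv j1 with h1 | h1 <;>
        rcases hv j2 with h2 | h2 <;>
        constructor <;> norm_num [Matrix.of_apply, h0, h1, h2]
    have hmem' := convexHull_min hsub hconv hmem
    obtain ⟨h1, h2⟩ := hmem'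
    have e01 : (((1:ℝ)/d) • T) j0 j1 = (1/d) * α := by
      rw [Matrix.smul_apply, smul_eq_mul, hT]
      norm_num [hj0, hj1, Nat.dist]
    have e10 : (((1:ℝ)/d) • T) j1 j0 = (1/d) * α := by
      rw [Matrix.smul_apply, smul_eq_mul, hT]
      norm_num [hj0, hj1, Nat.dist]
    have e12 : (((1:ℝ)/d) • T) j1 j2 = (1/d) * α := by
      rw [Matrix.smul_apply, smul_eq_mul, hT]
      norm_num [hj1, hj2, Nat.dist]
    have e11 : (((1:ℝ)/d) • T) j1 j1 = (1/d) * 1 := by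
      rw [Matrix.smul_apply, smul_eq_mul, hT]
      norm_num [hj1, Nat.dist]
    have e02 : (((1:ℝ)/d) • T) j0 j2 = 0 := by
      rw [Matrix.smul_apply, smul_eq_mul, hT]
      norm_num [hj0, hj2, Nat.dist]
    rw [e01] at h1
    rw [e10, e12, e11, e02] at h2
    have e : α = (d:ℝ) * (1/d * α) := by field_simp
    have e2 : (1:ℝ) = (d:ℝ) * (1/d * 1) := by field_simp
    have h1' := mul_nonneg hD0.le h1
    have h2' := mul_le_mul_of_nonneg_left h2 hD0.le
    constructor
    · linarith [e, h1']
    · nlinarith [e, e2, h2']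
  · -- backward direction
    rintro ⟨hα0, hα2⟩
    rw [BernoulliSet, convexHull_eq]
    refine ⟨Option (Fin (d-1) ⊕ Fin d), Finset.univ, bw d α,
      fun o => Matrix.of (fun i j => bvec d o i * bvec d o j), ?_, bw_sum d hd α, ?_, ?_⟩
    · -- nonneg weights
      intro o _
      rcases o with _ | k | m
      · show (0:ℝ) ≤ α * ((d:ℝ) - 1) / d
        apply div_nonneg (mul_nonneg hα0 (by linarith)) (by linarith)
      · show (0:ℝ) ≤ α / d
        positivity
      · show (0:ℝ) ≤ (1 - 2*α)/d + _ + _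
        have : (0:ℝ) ≤ (1 - 2*α)/d := div_nonneg (by linarith) (by linarith)
        split_ifs <;> positivity
    · -- membership in generators
      intro o _
      refine ⟨bvec d o, fun i => ?_, rfl⟩
      rcases o with _ | k | m
      · exact Or.inl rfl
      · simp only [bvec, pairVec]; split_ifs <;> simp
      · simp only [bvec, singVec]; split_ifs <;> simp
    · -- centerMass equals the matrix
      rw [Finset.centerMass_eq_of_sum_1 _ _ (bw_sum d hd α)]
      ext i j
      rw [Matrix.sum_apply]
      simp only [Matrix.smul_apply, Matrix.of_apply, smul_eq_mul]
      rw [Fintype.sum_option, Fintype.sum_sum_type]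
      simp only [bw, bvec, pairVec, singVec]
      rw [Fin.sum_univ_eq_sum_range
        (fun k => α / d * ((if (i:ℕ) = k ∨ (i:ℕ) = k + 1 then (1:ℝ) else 0) *
          (if (j:ℕ) = k ∨ (j:ℕ) = k + 1 then 1 else 0))) (d-1)]
      rw [Fin.sum_univ_eq_sum_range
        (fun m => ((1 - 2*α)/d + (if m = 0 then α/d else 0) + (if m = d-1 then α/d else 0)) *
          ((if (i:ℕ) = m then (1:ℝ) else 0) * (if (j:ℕ) = m then 1 else 0))) d]
      rw [← Finset.mul_sum]
      rw [sumS d (i:ℕ) (j:ℕ) _ i.isLt]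
      rw [hT]
      have hin : (i:ℕ) < d := i.isLt
      have hjn : (j:ℕ) < d := j.isLt
      rcases Nat.lt_trichotomy (i:ℕ) (j:ℕ) with hij | hij | hij
      · by_cases hadj : (j:ℕ) = (i:ℕ) + 1
        · rw [sumB d (i:ℕ) (j:ℕ) j.isLt hadj]
          have c0 : ¬ Nat.dist (i:ℕ) (j:ℕ) = 0 := by simp only [nat_dist_def]; omega
          have c1 : Nat.dist (i:ℕ) (j:ℕ) = 1 := by simp only [nat_dist_def]; omega
          have c2 : ¬ ((j:ℕ) = (i:ℕ)) := by omega
          rw [if_neg c0, if_pos c1, if_neg c2]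
          ring
        · rw [sumC d (i:ℕ) (j:ℕ) (by omega) (by omega) (by omega)]
          have c0 : ¬ Nat.dist (i:ℕ) (j:ℕ) = 0 := by simp only [nat_dist_def]; omega
          have c1 : ¬ Nat.dist (i:ℕ) (j:ℕ) = 1 := by simp only [nat_dist_def]; omega
          have c2 : ¬ ((j:ℕ) = (i:ℕ)) := by omega
          rw [if_neg c0, if_neg c1, if_neg c2]
          ring
      · rw [← hij]
        rw [sumA d (i:ℕ) i.isLt]
        have c0 : Nat.dist (i:ℕ) (i:ℕ) = 0 := by simp only [nat_dist_def]; omega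
        rw [if_pos c0, if_pos rfl]
        split_ifs <;> first | (exfalso; omega) | (field_simp; ring)
      · by_cases hadj : (i:ℕ) = (j:ℕ) + 1
        · rw [Finset.sum_congr rfl (fun k _ => mul_comm
            (if (i:ℕ) = k ∨ (i:ℕ) = k + 1 then (1:ℝ) else 0)
            (if (j:ℕ) = k ∨ (j:ℕ) = k + 1 then (1:ℝ) else 0))]
          rw [sumB d (j:ℕ) (i:ℕ) i.isLt hadj]
          have c0 : ¬ Nat.dist (i:ℕ) (j:ℕ) = 0 := by simp only [nat_dist_def]; omega
          have c1 : Nat.dist (i:ℕ) (j:ℕ) = 1 := by simp only [nat_dist_def]; omega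
          have c2 : ¬ ((j:ℕ) = (i:ℕ)) := by omega
          rw [if_neg c0, if_pos c1, if_neg c2]
          ring
        · rw [sumC d (i:ℕ) (j:ℕ) (by omega) (by omega) (by omega)]
          have c0 : ¬ Nat.dist (i:ℕ) (j:ℕ) = 0 := by simp only [nat_dist_def]; omega
          have c1 : ¬ Nat.dist (i:ℕ) (j:ℕ) = 1 := by simp only [nat_dist_def]; omega
          have c2 : ¬ ((j:ℕ) = (i:ℕ)) := by omega
          rw [if_neg c0, if_neg c1, if_neg c2]
          ring
end

section
/- Let d ≥ 2 and let α, β ∈ ℝ with 0 ≤ β ≤ α ≤ 1. If the d×d matrix B = (α − β)·I_d + β·J_d (all diagonal entries equal to α, all off-diagonal entries equal to β) belongs to ℬ_d, then β ≥ (α²d − α)/(d − 1). -/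
theorem stmt19 (d : ℕ) (hd : 2 ≤ d) (α β : ℝ)
    (hβ : 0 ≤ β) (hβα : β ≤ α) (hα : α ≤ 1)
    (B : Matrix (Fin d) (Fin d) ℝ)
    (hB : ∀ i j, B i j = if i = j then α else β)
    (hmem : B ∈ BernoulliSet d) :
    (α ^ 2 * d - α) / ((d : ℝ) - 1) ≤ β := by
  have hd2 : (2 : ℝ) ≤ (d : ℝ) := by exact_mod_cast hd
  set c : ℝ := (d : ℝ) * α with hc
  have hlin : IsLinearMap ℝ (fun M : Matrix (Fin d) (Fin d) ℝ =>
      (∑ i, ∑ j, M i j) - 2 * c * ∑ i, M i i) := by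
    constructor
    · intro x y
      simp only [Matrix.add_apply, Finset.sum_add_distrib]
      ring
    · intro a x
      simp only [Matrix.smul_apply, smul_eq_mul, ← Finset.mul_sum]
      ring
  have hconv : Convex ℝ {M : Matrix (Fin d) (Fin d) ℝ |
      -(c ^ 2) ≤ (∑ i, ∑ j, M i j) - 2 * c * ∑ i, M i i} :=
    convex_halfSpace_ge hlin _
  have hsub : {M : Matrix (Fin d) (Fin d) ℝ | ∃ v : Fin d → ℝ,
      (∀ i, v i = 0 ∨ v i = 1) ∧ M = Matrix.of (fun i j => v i * v j)} ⊆
      {M : Matrix (Fin d) (Fin d) ℝ |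
      -(c ^ 2) ≤ (∑ i, ∑ j, M i j) - 2 * c * ∑ i, M i i} := by
    rintro M ⟨v, hv, rfl⟩
    set k : ℝ := ∑ i, v i with hk
    have h1 : (∑ i, ∑ j, (Matrix.of fun i j => v i * v j) i j) = k ^ 2 := by
      simp only [Matrix.of_apply, ← Finset.mul_sum, ← Finset.sum_mul]
      ring
    have h2 : (∑ i, (Matrix.of fun i j => v i * v j) i i) = k := by
      simp only [Matrix.of_apply, hk]
      refine Finset.sum_congr rfl fun i _ => ?_
      rcases hv i with h | h <;> simp [h]
    simp only [Set.mem_setOf_eq, h1, h2]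
    nlinarith [sq_nonneg (k - c)]
  have hBmem := convexHull_min hsub hconv hmem
  simp only [Set.mem_setOf_eq] at hBmem
  have hrow : ∀ i : Fin d, (∑ j, B i j) = (α - β) + (d : ℝ) * β := by
    intro i
    have : (∑ j, B i j) = ∑ j, ((if i = j then α - β else 0) + β) := by
      refine Finset.sum_congr rfl fun j _ => ?_
      rw [hB]; split <;> ring
    rw [this, Finset.sum_add_distrib, Finset.sum_ite_eq]
    simp [Finset.card_univ]
  have hsum : (∑ i, ∑ j, B i j) = (d : ℝ) * ((α - β) + (d : ℝ) * β) := by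
    rw [Finset.sum_congr rfl fun i _ => hrow i]
    simp [Finset.card_univ]
    try ring
  have htr : (∑ i, B i i) = (d : ℝ) * α := by
    have : (∑ i, B i i) = ∑ _i : Fin d, α := by
      refine Finset.sum_congr rfl fun i _ => ?_
      rw [hB]; simp
    rw [this]; simp [Finset.card_univ, mul_comm]
  rw [hsum, htr, hc] at hBmem
  rw [div_le_iff₀ (by linarith : (0:ℝ) < (d : ℝ) - 1)]
  nlinarith [hBmem, hd2]
end
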